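/- arXiv:2405.13649 — 9 statements merged into one kernel-verified Lean document; each statement's English description precedes it below -/
import Mathlib

section
/- Let a, b ∈ ℝ and let c ∈ ℍ be a nonzero quaternion, and let Q = [[a, c], [c*, b]] be the corresponding 2×2 quaternion Hermitian matrix. The real quadratic equation (a − x)(b − x) = |c|² has two distinct real roots λ₁ ≠ λ₂ (its discriminant is (a − b)² + 4|c|² > 0). Define the 2×2 quaternion matrix U whose first column is (−c, a − λ₁)/((a − λ₁)² + |c|²)^{1/2} and whose second column is (−c, a − λ₂)/((a − λ₂)² + |c|²)^{1/2}. Then U is unitary (Uᴴ U = U Uᴴ = I) and Uᴴ Q U = diag(λ₁, λ₂). -/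
open Matrix

noncomputable section

/-- The 2×2 unitary quaternion matrix from Proposition 3.3, built from the two roots
`l1, l2` of `(a - x)(b - x) = |c|²`. -/
noncomputable def givensU (a : ℝ) (c : Quaternion ℝ) (l1 l2 : ℝ) :
    Matrix (Fin 2) (Fin 2) (Quaternion ℝ) :=
  !![-c / ((Real.sqrt ((a - l1) ^ 2 + ‖c‖ ^ 2) : ℝ) : Quaternion ℝ),
     -c / ((Real.sqrt ((a - l2) ^ 2 + ‖c‖ ^ 2) : ℝ) : Quaternion ℝ);
     ((a - l1 : ℝ) : Quaternion ℝ) / ((Real.sqrt ((a - l1) ^ 2 + ‖c‖ ^ 2) : ℝ) : Quaternion ℝ),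
     ((a - l2 : ℝ) : Quaternion ℝ) / ((Real.sqrt ((a - l2) ^ 2 + ‖c‖ ^ 2) : ℝ) : Quaternion ℝ)]

/-! For each root `l` the column `(-c, a - l)` is an eigenvector of `Q` with eigenvalue `l`: the
first row holds because real scalars commute with `c`, the second row is the quadratic equation.
By Vieta, `(a - l₁)(a - l₂) = -|c|²`, which makes the two columns orthogonal. Hence `U` is this
eigenvector matrix with normalized columns, so `Uᴴ U = 1`; a one-sided inverse of a square matrix
over a division ring is two-sided, and `Uᴴ Q U = Uᴴ U diag(l₁, l₂) = diag(l₁, l₂)`. -/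

open Quaternion

theorem exists_ne_roots_sub_mul_sub (a b : ℝ) {r : ℝ} (hr : 0 < r) :
    ∃ l1 l2 : ℝ, l1 ≠ l2 ∧ (a - l1) * (b - l1) = r ∧ (a - l2) * (b - l2) = r := by
  set s := √((a - b) ^ 2 + 4 * r)
  have hs : 0 < s := Real.sqrt_pos.mpr (by positivity)
  have hs2 : s ^ 2 = (a - b) ^ 2 + 4 * r := Real.sq_sqrt (by positivity)
  exact ⟨(a + b + s) / 2, (a + b - s) / 2, by linarith, by linear_combination hs2 / 4,
    by linear_combination hs2 / 4⟩

theorem sub_mul_sub_eq_neg_of_roots {a b r l1 l2 : ℝ} (hne : l1 ≠ l2)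
    (h1 : (a - l1) * (b - l1) = r) (h2 : (a - l2) * (b - l2) = r) :
    (a - l1) * (a - l2) = -r := by
  have hsum : l1 + l2 = a + b := by
    have h : (l2 - l1) * (a + b - l1 - l2) = 0 := by linear_combination h1 - h2
    rcases mul_eq_zero.mp h with h | h
    · exact absurd (by linarith) hne
    · linarith
  linear_combination -h1 - (a - l1) * hsum

section Normalize

variable {n : Type*} [Fintype n] [DecidableEq n]

theorem conjTranspose_mul_self_mul_diagonal_inv_sqrt (V : Matrix n n ℍ[ℝ]) {d : n → ℝ}
    (hd : ∀ j, 0 < d j) (hV : Vᴴ * V = diagonal fun j => (d j : ℍ[ℝ])) :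
    (V * diagonal fun j => (((√(d j))⁻¹ : ℝ) : ℍ[ℝ]))ᴴ *
      (V * diagonal fun j => (((√(d j))⁻¹ : ℝ) : ℍ[ℝ])) = 1 := by
  rw [conjTranspose_mul, diagonal_conjTranspose, mul_assoc, ← mul_assoc Vᴴ, hV]
  simp only [Pi.star_def, star_coe, diagonal_mul_diagonal, ← coe_mul]
  rw [← diagonal_one]
  congr 1
  funext j
  have hs : √(d j) ^ 2 = d j := Real.sq_sqrt (hd j).le
  have : √(d j) ≠ 0 := (Real.sqrt_pos.mpr (hd j)).ne'
  rw [← coe_one]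
  congr 1
  field_simp
  linarith

theorem commute_diagonal_coe (x : n → ℝ) (y : n → ℍ[ℝ]) :
    Commute (diagonal fun j => (x j : ℍ[ℝ])) (diagonal y) := by
  simp only [Commute, SemiconjBy, diagonal_mul_diagonal, coe_commutes]

end Normalize

theorem conjTranspose_mul_self_of_mul_eq_neg (c : ℍ[ℝ]) {t1 t2 : ℝ} (h : t1 * t2 = -‖c‖ ^ 2) :
    !![-c, -c; (t1 : ℍ[ℝ]), (t2 : ℍ[ℝ])]ᴴ * !![-c, -c; (t1 : ℍ[ℝ]), (t2 : ℍ[ℝ])] =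
      diagonal fun j => ((![t1 ^ 2 + ‖c‖ ^ 2, t2 ^ 2 + ‖c‖ ^ 2] j : ℝ) : ℍ[ℝ]) := by
  ext i j : 1
  fin_cases i <;> fin_cases j <;>
    simp [mul_apply, Fin.sum_univ_two, star_mul_self, normSq_eq_norm_mul_self, ← coe_mul,
      ← coe_add, h, mul_comm t2, sq, add_comm]

theorem mul_eq_mul_diagonal_of_roots (a b : ℝ) (c : ℍ[ℝ]) {l1 l2 : ℝ}
    (h1 : (a - l1) * (b - l1) = ‖c‖ ^ 2) (h2 : (a - l2) * (b - l2) = ‖c‖ ^ 2) :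
    !![(a : ℍ[ℝ]), c; star c, (b : ℍ[ℝ])] *
        !![-c, -c; ((a - l1 : ℝ) : ℍ[ℝ]), ((a - l2 : ℝ) : ℍ[ℝ])] =
      !![-c, -c; ((a - l1 : ℝ) : ℍ[ℝ]), ((a - l2 : ℝ) : ℍ[ℝ])] *
        diagonal ![(l1 : ℍ[ℝ]), (l2 : ℍ[ℝ])] := by
  ext i j : 1
  fin_cases i <;> fin_cases j <;>
    simp [mul_apply, Fin.sum_univ_two, star_mul_self, normSq_eq_norm_mul_self]
  · rw [coe_commutes]; noncomm_ring
  · rw [coe_commutes]; noncomm_ring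
  · norm_cast; congr 1; linear_combination h1
  · norm_cast; congr 1; linear_combination h2

theorem givensU_eq_mul_diagonal (a : ℝ) (c : ℍ[ℝ]) (l1 l2 : ℝ) :
    givensU a c l1 l2 = !![-c, -c; ((a - l1 : ℝ) : ℍ[ℝ]), ((a - l2 : ℝ) : ℍ[ℝ])] *
      diagonal fun j =>
        (((√(![(a - l1) ^ 2 + ‖c‖ ^ 2, (a - l2) ^ 2 + ‖c‖ ^ 2] j))⁻¹ : ℝ) : ℍ[ℝ]) := by
  ext i j : 1
  fin_cases i <;> fin_cases j <;> simp [givensU, div_eq_mul_inv, coe_inv]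

/-- Proposition 3.3: for `a, b ∈ ℝ` and a nonzero quaternion `c`, the real quadratic equation
`(a - x)(b - x) = |c|²` has two distinct real roots, and for any two distinct roots `l1 ≠ l2`
the matrix `givensU a c l1 l2` is unitary and diagonalizes `[[a, c], [c*, b]]` to
`diag(l1, l2)`. -/
theorem givens_diagonalization (a b : ℝ) (c : Quaternion ℝ) (hc : c ≠ 0) :
    (∃ l1 l2 : ℝ, l1 ≠ l2 ∧ (a - l1) * (b - l1) = ‖c‖ ^ 2 ∧ (a - l2) * (b - l2) = ‖c‖ ^ 2) ∧
    ∀ l1 l2 : ℝ, l1 ≠ l2 →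
      (a - l1) * (b - l1) = ‖c‖ ^ 2 → (a - l2) * (b - l2) = ‖c‖ ^ 2 →
      (givensU a c l1 l2)ᴴ * givensU a c l1 l2 = 1 ∧
      givensU a c l1 l2 * (givensU a c l1 l2)ᴴ = 1 ∧
      (givensU a c l1 l2)ᴴ * !![(a : Quaternion ℝ), c; star c, (b : Quaternion ℝ)] *
          givensU a c l1 l2
        = Matrix.diagonal ![(l1 : Quaternion ℝ), (l2 : Quaternion ℝ)] := by
  have hc2 : 0 < ‖c‖ ^ 2 := by positivity
  refine ⟨exists_ne_roots_sub_mul_sub a b hc2, fun l1 l2 hne h1 h2 => ?_⟩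
  have hd : ∀ j, 0 < ![(a - l1) ^ 2 + ‖c‖ ^ 2, (a - l2) ^ 2 + ‖c‖ ^ 2] j := by
    intro j; fin_cases j <;> simp <;> positivity
  have hUU : (givensU a c l1 l2)ᴴ * givensU a c l1 l2 = 1 := by
    rw [givensU_eq_mul_diagonal]
    exact conjTranspose_mul_self_mul_diagonal_inv_sqrt _ hd
      (conjTranspose_mul_self_of_mul_eq_neg c (sub_mul_sub_eq_neg_of_roots hne h1 h2))
  have hQU : !![(a : ℍ[ℝ]), c; star c, (b : ℍ[ℝ])] * givensU a c l1 l2 =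
      givensU a c l1 l2 * diagonal ![(l1 : ℍ[ℝ]), (l2 : ℍ[ℝ])] := by
    rw [givensU_eq_mul_diagonal, ← mul_assoc, mul_eq_mul_diagonal_of_roots a b c h1 h2, mul_assoc,
      ← (commute_diagonal_coe _ _).eq, mul_assoc]
  refine ⟨hUU, mul_eq_one_comm.mp hUU, ?_⟩
  rw [mul_assoc, hQU, ← mul_assoc, hUU, one_mul]

end
end

section
/- Let Q̂ = Q_st + Q_I ε be a 2×2 dual quaternion Hermitian matrix and let U be a 2×2 unitary quaternion matrix such that Uᴴ Q_st U = diag(λ₁, λ₂) with λ₁, λ₂ distinct real numbers. Write x = (Uᴴ Q_I U)_{11}, y = (Uᴴ Q_I U)_{22} (both real, since Uᴴ Q_I U is Hermitian) and z = (Uᴴ Q_I U)_{12}. Define the dual quaternion matrix V̂ = [[1, (z/(λ₂ − λ₁)) ε], [(z*/(λ₁ − λ₂)) ε, 1]]. Then U V̂ (with U regarded as a dual quaternion matrix with zero dual part) is a unitary dual quaternion matrix, and V̂ᴴ Uᴴ Q̂ U V̂ = diag(λ₁ + x ε, λ₂ + y ε). -/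
open Matrix

noncomputable section

/-- Componentwise conjugation on dual quaternions: `(q_st + q_I ε)* = q_st* + q_I* ε`. -/
noncomputable instance : Star (DualNumber (Quaternion ℝ)) :=
  ⟨fun q => TrivSqZeroExt.inl (star q.fst) + TrivSqZeroExt.inr (star q.snd)⟩

/-- The dual quaternion matrix `A + B ε` with standard part `A` and dual part `B`. -/
noncomputable def toDualQ {n : ℕ} (A B : Matrix (Fin n) (Fin n) (Quaternion ℝ)) :
    Matrix (Fin n) (Fin n) (DualNumber (Quaternion ℝ)) :=
  Matrix.of fun i j => TrivSqZeroExt.inl (A i j) + TrivSqZeroExt.inr (B i j)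

section Aux

variable {n : ℕ} (A B C D : Matrix (Fin n) (Fin n) (Quaternion ℝ))

@[simp] lemma fst_toDualQ (i j : Fin n) : (toDualQ A B i j).fst = A i j := by
  simp [toDualQ]

@[simp] lemma snd_toDualQ (i j : Fin n) : (toDualQ A B i j).snd = B i j := by
  simp [toDualQ]

@[simp] lemma fst_star' (q : DualNumber (Quaternion ℝ)) : (star q).fst = star q.fst := by
  show (TrivSqZeroExt.inl (star q.fst) + TrivSqZeroExt.inr (star q.snd)).fst = _
  simp

@[simp] lemma snd_star' (q : DualNumber (Quaternion ℝ)) : (star q).snd = star q.snd := by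
  show (TrivSqZeroExt.inl (star q.fst) + TrivSqZeroExt.inr (star q.snd)).snd = _
  simp

lemma toDualQ_mul : toDualQ A B * toDualQ C D = toDualQ (A * C) (A * D + B * C) := by
  refine Matrix.ext fun i j => TrivSqZeroExt.ext ?_ ?_
  · simp [Matrix.mul_apply, TrivSqZeroExt.fst_sum]
  · simp [Matrix.mul_apply, TrivSqZeroExt.snd_sum, Finset.sum_add_distrib]

lemma toDualQ_conjT : (toDualQ A B)ᴴ = toDualQ Aᴴ Bᴴ := by
  refine Matrix.ext fun i j => TrivSqZeroExt.ext ?_ ?_ <;>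
    simp [Matrix.conjTranspose_apply]

lemma toDualQ_one : toDualQ (1 : Matrix (Fin n) (Fin n) (Quaternion ℝ)) 0 = 1 := by
  refine Matrix.ext fun i j => TrivSqZeroExt.ext ?_ ?_ <;>
    simp [Matrix.one_apply] <;> split <;> simp

lemma toDualQ_inj {A B C D : Matrix (Fin n) (Fin n) (Quaternion ℝ)}
    (h1 : A = C) (h2 : B = D) : toDualQ A B = toDualQ C D := by rw [h1, h2]

lemma star_div_coe (q : Quaternion ℝ) (r : ℝ) :
    star (q / (r : Quaternion ℝ)) = star q / (r : Quaternion ℝ) := by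
  rw [div_eq_mul_inv, StarMul.star_mul, star_inv₀, Quaternion.star_coe, div_eq_mul_inv]
  exact ((Quaternion.coe_commute r (star q)).inv_left₀).eq

lemma key1 (q : Quaternion ℝ) (a b : ℝ) (h : a ≠ b) :
    (a : Quaternion ℝ) * (q / ((b - a : ℝ) : Quaternion ℝ)) + q
      - (q / ((b - a : ℝ) : Quaternion ℝ)) * ((b : ℝ) : Quaternion ℝ) = 0 := by
  have hc : ((b - a : ℝ) : Quaternion ℝ) ≠ 0 := by
    simpa [sub_eq_zero] using (Ne.symm h)
  rw [← Quaternion.coe_commutes b, div_eq_mul_inv, ← mul_assoc, ← mul_assoc,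
    Quaternion.coe_commutes a, Quaternion.coe_commutes b, mul_assoc, mul_assoc]
  have h2 : ((a : ℝ) : Quaternion ℝ) * (((b - a : ℝ) : Quaternion ℝ))⁻¹
      - ((b : ℝ) : Quaternion ℝ) * (((b - a : ℝ) : Quaternion ℝ))⁻¹ = -1 := by
    rw [← sub_mul, ← Quaternion.coe_sub]
    have h3 : ((a - b : ℝ) : Quaternion ℝ) = -((b - a : ℝ) : Quaternion ℝ) := by
      rw [show (a - b : ℝ) = -(b - a) by ring, Quaternion.coe_neg]
    rw [h3, neg_mul, mul_inv_cancel₀ hc]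
  have h4 : q * ((a : Quaternion ℝ) * (((b - a : ℝ) : Quaternion ℝ))⁻¹)
      - q * ((b : Quaternion ℝ) * (((b - a : ℝ) : Quaternion ℝ))⁻¹) = -q := by
    rw [← mul_sub, h2, mul_neg_one]
  rw [add_sub_right_comm, h4, neg_add_cancel]

lemma key1' (q : Quaternion ℝ) (a b : ℝ) (h : a ≠ b) :
    (a : Quaternion ℝ) * (q / ((b : Quaternion ℝ) - (a : Quaternion ℝ)))
      + (q + -(q / ((b : Quaternion ℝ) - (a : Quaternion ℝ)) * (b : Quaternion ℝ))) = 0 := by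
  rw [← Quaternion.coe_sub, ← sub_eq_add_neg, ← add_sub_assoc]
  exact key1 q a b h

end Aux

/-- Proposition 3.4: if `U` is a unitary quaternion matrix with
`Uᴴ Qst U = diag(l1, l2)`, `l1 ≠ l2`, then with `x, y, z` the entries of `Uᴴ QI U`
and `V̂` the dual Givens correction, `U V̂` is a unitary dual quaternion matrix and
`V̂ᴴ Uᴴ Q̂ U V̂ = diag(l1 + x ε, l2 + y ε)`. -/
theorem dual_givens_diagonalization
    (Qst QI U : Matrix (Fin 2) (Fin 2) (Quaternion ℝ))
    (hQst : Qstᴴ = Qst) (hQI : QIᴴ = QI)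
    (hU : Uᴴ * U = 1) (hU' : U * Uᴴ = 1)
    (l1 l2 : ℝ) (hl : l1 ≠ l2)
    (hdiag : Uᴴ * Qst * U = Matrix.diagonal ![(l1 : Quaternion ℝ), (l2 : Quaternion ℝ)]) :
    let x := (Uᴴ * QI * U) 0 0
    let y := (Uᴴ * QI * U) 1 1
    let z := (Uᴴ * QI * U) 0 1
    let V : Matrix (Fin 2) (Fin 2) (DualNumber (Quaternion ℝ)) :=
      toDualQ 1 !![0, z / ((l2 - l1 : ℝ) : Quaternion ℝ);
                   star z / ((l1 - l2 : ℝ) : Quaternion ℝ), 0]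
    let Ud := toDualQ U 0
    ((Ud * V)ᴴ * (Ud * V) = 1 ∧ (Ud * V) * (Ud * V)ᴴ = 1) ∧
    Vᴴ * Udᴴ * toDualQ Qst QI * Ud * V =
      Matrix.diagonal
        ![TrivSqZeroExt.inl (l1 : Quaternion ℝ) + TrivSqZeroExt.inr x,
          TrivSqZeroExt.inl (l2 : Quaternion ℝ) + TrivSqZeroExt.inr y] := by
  intro x y z V Ud
  set M := Uᴴ * QI * U with hMdef
  have hM : Mᴴ = M := by
    rw [hMdef, Matrix.conjTranspose_mul, Matrix.conjTranspose_mul, Matrix.conjTranspose_conjTranspose,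
      hQI, Matrix.mul_assoc]
  set N : Matrix (Fin 2) (Fin 2) (Quaternion ℝ) :=
    !![0, z / ((l2 - l1 : ℝ) : Quaternion ℝ);
       star z / ((l1 - l2 : ℝ) : Quaternion ℝ), 0] with hNdef
  have hVN : V = toDualQ 1 N := rfl
  have hz : z = M 0 1 := rfl
  have hx : x = M 0 0 := rfl
  have hy : y = M 1 1 := rfl
  have hz10 : M 1 0 = star z := by
    rw [hz]
    conv_lhs => rw [← hM]
    simp [Matrix.conjTranspose_apply]
  have hcoe : ((l1 - l2 : ℝ) : Quaternion ℝ) = -((l2 - l1 : ℝ) : Quaternion ℝ) := by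
    rw [show (l1 - l2 : ℝ) = -(l2 - l1) by ring, Quaternion.coe_neg]
  have h01 : star ((star z) / ((l1 - l2 : ℝ) : Quaternion ℝ))
      = -(z / ((l2 - l1 : ℝ) : Quaternion ℝ)) := by
    rw [star_div_coe, star_star, hcoe, div_neg]
  have h10 : star (z / ((l2 - l1 : ℝ) : Quaternion ℝ))
      = -((star z) / ((l1 - l2 : ℝ) : Quaternion ℝ)) := by
    rw [star_div_coe, hcoe, div_neg, neg_neg]
  have hNs : Nᴴ = -N := by
    rw [hNdef]
    refine Matrix.ext fun i j => ?_
    fin_cases i <;> fin_cases j <;>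
      simp only [Matrix.conjTranspose_apply, Matrix.neg_apply, Fin.zero_eta, Fin.mk_one,
        Matrix.cons_val', Matrix.cons_val_zero, Matrix.cons_val_one, Matrix.head_cons,
        Matrix.head_fin_const, Matrix.empty_val', Matrix.cons_val_fin_one, Matrix.of_apply]
    · simp
    · exact h01
    · exact h10
    · simp
  have hUdV : Ud * V = toDualQ U (U * N) := by
    rw [hVN, show Ud = toDualQ U 0 from rfl, toDualQ_mul, Matrix.mul_one, Matrix.zero_mul,
      add_zero]
  have hUdVH : (Ud * V)ᴴ = toDualQ Uᴴ (Nᴴ * Uᴴ) := by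
    rw [hUdV, toDualQ_conjT, Matrix.conjTranspose_mul]
  constructor
  · constructor
    · rw [hUdVH, hUdV, toDualQ_mul, ← toDualQ_one]
      refine toDualQ_inj hU ?_
      rw [← Matrix.mul_assoc Uᴴ U N, Matrix.mul_assoc Nᴴ Uᴴ U, hU, Matrix.one_mul,
        Matrix.mul_one, hNs, add_neg_cancel]
    · rw [hUdVH, hUdV, toDualQ_mul, ← toDualQ_one]
      refine toDualQ_inj hU' ?_
      rw [hNs, Matrix.neg_mul, Matrix.mul_neg, Matrix.mul_assoc U N Uᴴ, neg_add_cancel]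
  · have hVH : Vᴴ = toDualQ 1 Nᴴ := by
      rw [hVN, toDualQ_conjT, Matrix.conjTranspose_one]
    have hUdH : Udᴴ = toDualQ Uᴴ 0 := by
      rw [show Ud = toDualQ U 0 from rfl, toDualQ_conjT, Matrix.conjTranspose_zero]
    rw [hVH, hUdH, hVN, show Ud = toDualQ U 0 from rfl, toDualQ_mul, toDualQ_mul, toDualQ_mul,
      toDualQ_mul]
    have hRHS :
        Matrix.diagonal
          ![TrivSqZeroExt.inl (l1 : Quaternion ℝ) + TrivSqZeroExt.inr x,
            TrivSqZeroExt.inl (l2 : Quaternion ℝ) + TrivSqZeroExt.inr y] =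
        toDualQ (Matrix.diagonal ![(l1 : Quaternion ℝ), (l2 : Quaternion ℝ)])
          (Matrix.diagonal ![x, y]) := by
      refine Matrix.ext fun i j => TrivSqZeroExt.ext ?_ ?_ <;>
        fin_cases i <;> fin_cases j <;> simp [Matrix.diagonal]
    rw [hRHS]
    set D : Matrix (Fin 2) (Fin 2) (Quaternion ℝ) :=
      Matrix.diagonal ![(l1 : Quaternion ℝ), (l2 : Quaternion ℝ)] with hDdef
    refine toDualQ_inj ?_ ?_
    · simp only [Matrix.one_mul, Matrix.mul_one]
      exact hdiag
    · simp only [Matrix.one_mul, Matrix.mul_one, Matrix.zero_mul, Matrix.mul_zero,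
        add_zero, zero_add]
      rw [Matrix.add_mul, hdiag, Matrix.mul_assoc Nᴴ Uᴴ Qst, Matrix.mul_assoc Nᴴ (Uᴴ * Qst) U,
        hdiag, hNs, Matrix.neg_mul, ← hMdef]
      refine Matrix.ext fun i j => ?_
      fin_cases i <;> fin_cases j <;>
        simp [hNdef, hDdef, Matrix.diagonal_mul, Matrix.mul_diagonal, Matrix.diagonal_apply,
          Matrix.vecMul_diagonal, ← hx, ← hy, ← hz, hz10]
      · exact key1' z l1 l2 hl
      · exact key1' (star z) l2 l1 hl.symm
end
end

section
/- Let Q̂ be an n×n dual quaternion Hermitian matrix, let k ≠ l be indices, and let Ĵ be an n×n unitary dual quaternion matrix that agrees with the identity outside the {k,l} block, i.e., Ĵ_{ii} = 1 for i ∉ {k,l} and Ĵ_{ij} = 0 for every off-diagonal position (i,j) other than the positions (k,l) and (l,k). Suppose P̂ = Ĵᴴ Q̂ Ĵ satisfies P̂_{kl} = P̂_{lk} = 0. Then N(P̂) = N(Q̂) − (Q̂_{kl})* Q̂_{kl} − (Q̂_{lk})* Q̂_{lk}, where for a dual quaternion matrix Â, N(Â) denotes the dual number Σ_{i≠j} (Â_{ij})*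 Â_{ij}. -/
open Matrix

noncomputable section

/-- The off-diagonal squared Frobenius sum `N(Â) = Σ_{i≠j} (Â_ij)* Â_ij` of a dual quaternion
matrix, a dual number. -/
noncomputable def Ndq {n : ℕ} (A : Matrix (Fin n) (Fin n) (DualNumber (Quaternion ℝ))) :
    DualNumber (Quaternion ℝ) :=
  ∑ i, ∑ j, if i ≠ j then star (A i j) * A i j else 0

namespace DQAux

abbrev R := DualNumber (Quaternion ℝ)

lemma star_fst' (q : R) : (star q).fst = star q.fst := by
  show (TrivSqZeroExt.inl (star q.fst) + TrivSqZeroExt.inr (star q.snd)).fst = _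
  simp

lemma star_snd' (q : R) : (star q).snd = star q.snd := by
  show (TrivSqZeroExt.inl (star q.fst) + TrivSqZeroExt.inr (star q.snd)).snd = _
  simp

lemma quat_comm (a b : Quaternion ℝ) :
    star a * b + star b * a = a * star b + b * star a := by
  ext <;>
    simp [Quaternion.re_mul, Quaternion.imI_mul, Quaternion.imJ_mul, Quaternion.imK_mul] <;>
    ring

noncomputable instance : StarRing R where
  star_involutive q := by
    refine TrivSqZeroExt.ext ?_ ?_ <;> simp only [star_fst', star_snd', star_star]
  star_mul p q := by
    refine TrivSqZeroExt.ext ?_ ?_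
    · simp [star_fst', TrivSqZeroExt.fst_mul]
    · simp [star_snd', star_fst', TrivSqZeroExt.snd_mul, star_add, add_comm]
  star_add p q := by
    refine TrivSqZeroExt.ext ?_ ?_ <;>
      simp [star_fst', star_snd', TrivSqZeroExt.fst_add, TrivSqZeroExt.snd_add, star_add]

lemma dq_star_comm_self (q : R) : star q * q = q * star q := by
  refine TrivSqZeroExt.ext ?_ ?_
  · simp only [TrivSqZeroExt.fst_mul, star_fst']
    exact star_comm_self' q.fst
  · simp only [TrivSqZeroExt.snd_mul, star_fst', star_snd', smul_eq_mul]
    show star q.fst * q.snd + star q.snd * q.fst = q.fst * star q.snd + q.snd * star q.fst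
    exact quat_comm q.fst q.snd

variable {n : ℕ}

/-- full squared Frobenius sum -/
noncomputable def Fsq (A : Matrix (Fin n) (Fin n) R) : R :=
  ∑ i, ∑ j, star (A i j) * A i j

lemma Fsq_eq_trace_conj (A : Matrix (Fin n) (Fin n) R) : Fsq A = trace (Aᴴ * A) := by
  rw [Fsq, Finset.sum_comm]
  simp [Matrix.trace, Matrix.mul_apply, Matrix.conjTranspose_apply, Matrix.diag]

lemma Fsq_eq_trace_self (A : Matrix (Fin n) (Fin n) R) : Fsq A = trace (A * Aᴴ) := by
  rw [Fsq]
  simp only [Matrix.trace, Matrix.mul_apply, Matrix.conjTranspose_apply, Matrix.diag]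
  exact Finset.sum_congr rfl fun i _ => Finset.sum_congr rfl fun j _ => dq_star_comm_self _

lemma Fsq_left (J B : Matrix (Fin n) (Fin n) R) (h : J * Jᴴ = 1) :
    Fsq (Jᴴ * B) = Fsq B := by
  rw [Fsq_eq_trace_conj, Fsq_eq_trace_conj, conjTranspose_mul, conjTranspose_conjTranspose,
    Matrix.mul_assoc, ← Matrix.mul_assoc J, h, Matrix.one_mul]

lemma Fsq_right (B J : Matrix (Fin n) (Fin n) R) (h : J * Jᴴ = 1) :
    Fsq (B * J) = Fsq B := by
  rw [Fsq_eq_trace_self, Fsq_eq_trace_self, conjTranspose_mul,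
    Matrix.mul_assoc, ← Matrix.mul_assoc J, h, Matrix.one_mul]

lemma Fsq_conj (J B : Matrix (Fin n) (Fin n) R) (h : J * Jᴴ = 1) :
    Fsq (Jᴴ * B * J) = Fsq B := by
  rw [Fsq_right _ _ h, Fsq_left _ _ h]

lemma Fsq_eq_Ndq_add_diag (A : Matrix (Fin n) (Fin n) R) :
    Fsq A = Ndq A + ∑ i, star (A i i) * A i i := by
  rw [Fsq, Ndq, ← Finset.sum_add_distrib]
  refine Finset.sum_congr rfl fun i _ => ?_
  have : star (A i i) * A i i = ∑ j, if i = j then star (A i j) * A i j else 0 := by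
    rw [Finset.sum_ite_eq]; simp
  rw [this, ← Finset.sum_add_distrib]
  refine Finset.sum_congr rfl fun j _ => ?_
  by_cases h : i = j <;> simp [h]

lemma triple_apply (A J : Matrix (Fin n) (Fin n) R) (i j : Fin n) :
    (Jᴴ * A * J) i j = ∑ q, (∑ p, star (J p i) * A p q) * J q j := by
  simp [Matrix.mul_apply, Matrix.conjTranspose_apply]

lemma sum_collapse_pair {M : Type*} [AddCommMonoid M] {k l : Fin n} (hkl : k ≠ l)
    (g : Fin n → M) (hg : ∀ i, i ≠ k → i ≠ l → g i = 0) :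
    ∑ i, g i = g k + g l := by
  rw [← Finset.sum_pair hkl]
  refine (Finset.sum_subset (Finset.subset_univ _) fun x _ hx => ?_).symm
  simp only [Finset.mem_insert, Finset.mem_singleton, not_or] at hx
  exact hg x hx.1 hx.2

end DQAux
set_option maxHeartbeats 1000000 in
/-- Theorem 3.5 (first part): eliminating the `(k,l)` and `(l,k)` entries of a dual quaternion
Hermitian matrix `Q̂` by a unitary dual quaternion matrix `Ĵ` supported on the `{k,l}` block
decreases `N` by exactly `(Q̂_kl)* Q̂_kl + (Q̂_lk)* Q̂_lk`. -/
theorem Ndq_givens_elimination (n : ℕ)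
    (Q J : Matrix (Fin n) (Fin n) (DualNumber (Quaternion ℝ)))
    (hQ : Qᴴ = Q) (k l : Fin n) (hkl : k ≠ l)
    (hJu : Jᴴ * J = 1) (hJu' : J * Jᴴ = 1)
    (hJd : ∀ i, i ≠ k → i ≠ l → J i i = 1)
    (hJo : ∀ i j, i ≠ j → (i, j) ≠ (k, l) → (i, j) ≠ (l, k) → J i j = 0)
    (hPkl : (Jᴴ * Q * J) k l = 0) (hPlk : (Jᴴ * Q * J) l k = 0) :
    Ndq (Jᴴ * Q * J) = Ndq Q - star (Q k l) * Q k l - star (Q l k) * Q l k := by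
  classical
  set P : Matrix (Fin n) (Fin n) DQAux.R := Jᴴ * Q * J with hPdef
  have hJz1 : ∀ i p : Fin n, i ≠ k → i ≠ l → p ≠ i → J p i = 0 := by
    intro i p hik hil hpi
    refine hJo p i hpi (fun h => hil (congrArg Prod.snd h)) (fun h => hik (congrArg Prod.snd h))
  have hJz2 : ∀ i p : Fin n, (i = k ∨ i = l) → p ≠ k → p ≠ l → J p i = 0 := by
    intro i p hi hpk hpl
    have hpi : p ≠ i := by rcases hi with rfl | rfl <;> assumption
    refine hJo p i hpi (fun h => hpk (congrArg Prod.fst h)) (fun h => hpl (congrArg Prod.fst h))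
  have hPdiag : ∀ i : Fin n, i ≠ k → i ≠ l → P i i = Q i i := by
    intro i hik hil
    rw [hPdef, DQAux.triple_apply]
    rw [Finset.sum_eq_single i]
    · rw [hJd i hik hil, mul_one, Finset.sum_eq_single i]
      · rw [hJd i hik hil, star_one, one_mul]
      · intro p _ hpi; rw [hJz1 i p hik hil hpi, star_zero, zero_mul]
      · intro h; exact absurd (Finset.mem_univ i) h
    · intro q _ hqi; rw [hJz1 i q hik hil hqi, mul_zero]
    · intro h; exact absurd (Finset.mem_univ i) h
  set Q' : Matrix (Fin n) (Fin n) DQAux.R :=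
    Matrix.of (fun p q => if (p = k ∨ p = l) ∧ (q = k ∨ q = l) then Q p q else 0) with hQ'def
  have hQ'app : ∀ p q, Q' p q = if (p = k ∨ p = l) ∧ (q = k ∨ q = l) then Q p q else 0 :=
    fun p q => rfl
  set T : Matrix (Fin n) (Fin n) DQAux.R := Jᴴ * Q' * J with hTdef
  -- T agrees with P on the {k,l} block
  have hblock : ∀ i j, (i = k ∨ i = l) → (j = k ∨ j = l) → T i j = P i j := by
    intro i j hi hj
    rw [hTdef, hPdef, DQAux.triple_apply, DQAux.triple_apply]
    refine Finset.sum_congr rfl fun q _ => ?_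
    by_cases hq : q = k ∨ q = l
    · congr 1
      refine Finset.sum_congr rfl fun p _ => ?_
      by_cases hp : p = k ∨ p = l
      · rw [hQ'app, if_pos ⟨hp, hq⟩]
      · push_neg at hp
        rw [hJz2 i p hi hp.1 hp.2, star_zero, zero_mul, zero_mul]
    · push_neg at hq
      rw [hJz2 j q hj hq.1 hq.2, mul_zero, mul_zero]
  -- T vanishes outside the {k,l} block
  have houtr : ∀ i j, ¬(i = k ∨ i = l) → T i j = 0 := by
    intro i j hi
    push_neg at hi
    rw [hTdef, DQAux.triple_apply]
    refine Finset.sum_eq_zero fun q _ => ?_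
    have : (∑ p, star (J p i) * Q' p q) = 0 := by
      refine Finset.sum_eq_zero fun p _ => ?_
      by_cases hpi : p = i
      · subst hpi
        rw [hQ'app, if_neg (by tauto), mul_zero]
      · rw [hJz1 i p hi.1 hi.2 hpi, star_zero, zero_mul]
    rw [this, zero_mul]
  have houtc : ∀ i j, ¬(j = k ∨ j = l) → T i j = 0 := by
    intro i j hj
    push_neg at hj
    rw [hTdef, DQAux.triple_apply]
    refine Finset.sum_eq_zero fun q _ => ?_
    by_cases hqj : q = j
    · subst hqj
      have : (∑ p, star (J p i) * Q' p q) = 0 := by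
        refine Finset.sum_eq_zero fun p _ => ?_
        rw [hQ'app, if_neg (by tauto), mul_zero]
      rw [this, zero_mul]
    · rw [hJz1 j q hj.1 hj.2 hqj, mul_zero]
  -- Frobenius sum of Q'
  have hrowQ' : ∀ i, ¬(i = k ∨ i = l) → (∑ j, star (Q' i j) * Q' i j) = 0 := by
    intro i hi
    refine Finset.sum_eq_zero fun j _ => ?_
    rw [hQ'app, if_neg (by tauto), star_zero, zero_mul]
  have hFQ' : DQAux.Fsq Q' =
      (star (Q k k) * Q k k + star (Q k l) * Q k l) +
      (star (Q l k) * Q l k + star (Q l l) * Q l l) := by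
    rw [DQAux.Fsq]
    rw [DQAux.sum_collapse_pair hkl _ (fun i hik hil => hrowQ' i (by tauto))]
    have hgk : (∑ j, star (Q' k j) * Q' k j) =
        star (Q k k) * Q k k + star (Q k l) * Q k l := by
      rw [DQAux.sum_collapse_pair hkl _
        (fun j hjk hjl => by rw [hQ'app, if_neg (by tauto), star_zero, zero_mul])]
      rw [hQ'app, if_pos (by tauto), hQ'app, if_pos (by tauto)]
    have hgl : (∑ j, star (Q' l j) * Q' l j) =
        star (Q l k) * Q l k + star (Q l l) * Q l l := by
      rw [DQAux.sum_collapse_pair hkl _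
        (fun j hjk hjl => by rw [hQ'app, if_neg (by tauto), star_zero, zero_mul])]
      rw [hQ'app, if_pos (by tauto), hQ'app, if_pos (by tauto)]
    rw [hgk, hgl]
  -- Frobenius sum of T
  have hFT : DQAux.Fsq T = star (P k k) * P k k + star (P l l) * P l l := by
    rw [DQAux.Fsq]
    rw [DQAux.sum_collapse_pair hkl _ (fun i hik hil => Finset.sum_eq_zero fun j _ => by
      rw [houtr i j (by tauto), star_zero, zero_mul])]
    have hk : (∑ j, star (T k j) * T k j) = star (P k k) * P k k := by
      rw [DQAux.sum_collapse_pair hkl _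
        (fun j hjk hjl => by rw [houtc k j (by tauto), star_zero, zero_mul])]
      rw [hblock k k (Or.inl rfl) (Or.inl rfl), hblock k l (Or.inl rfl) (Or.inr rfl),
        hPkl, star_zero, zero_mul, add_zero]
    have hl : (∑ j, star (T l j) * T l j) = star (P l l) * P l l := by
      rw [DQAux.sum_collapse_pair hkl _
        (fun j hjk hjl => by rw [houtc l j (by tauto), star_zero, zero_mul])]
      rw [hblock l k (Or.inr rfl) (Or.inl rfl), hblock l l (Or.inr rfl) (Or.inr rfl),
        hPlk, star_zero, zero_mul, zero_add]
    rw [hk, hl]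
  -- unitary invariance
  have hinvT : DQAux.Fsq T = DQAux.Fsq Q' := DQAux.Fsq_conj J Q' hJu'
  have hinvP : DQAux.Fsq P = DQAux.Fsq Q := DQAux.Fsq_conj J Q hJu'
  -- the block identity for the diagonal entries
  have hblockid : star (P k k) * P k k + star (P l l) * P l l =
      (star (Q k k) * Q k k + star (Q k l) * Q k l) +
      (star (Q l k) * Q l k + star (Q l l) * Q l l) := by
    rw [← hFT, hinvT, hFQ']
  -- diagonal sums
  have hdiag : (∑ i, star (P i i) * P i i) =
      (∑ i, star (Q i i) * Q i i) + (star (Q k l) * Q k l + star (Q l k) * Q l k) := by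
    have hsub : (∑ i, (star (P i i) * P i i - star (Q i i) * Q i i)) =
        (star (P k k) * P k k - star (Q k k) * Q k k) +
        (star (P l l) * P l l - star (Q l l) * Q l l) := by
      refine DQAux.sum_collapse_pair hkl _ fun i hik hil => by
        rw [hPdiag i hik hil, sub_self]
    have hA : (star (P k k) * P k k - star (Q k k) * Q k k) +
        (star (P l l) * P l l - star (Q l l) * Q l l) =
        star (Q k l) * Q k l + star (Q l k) * Q l k := by
      have e : (star (P k k) * P k k - star (Q k k) * Q k k) +
          (star (P l l) * P l l - star (Q l l) * Q l l) =
          (star (P k k) * P k k + star (P l l) * P l l) -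
          (star (Q k k) * Q k k + star (Q l l) * Q l l) := by abel
      rw [e, hblockid]; abel
    rw [Finset.sum_sub_distrib, sub_eq_iff_eq_add] at hsub
    rw [hsub, hA]; abel
  -- assemble
  have h1 : Ndq P + (∑ i, star (P i i) * P i i) = Ndq Q + (∑ i, star (Q i i) * Q i i) := by
    rw [← DQAux.Fsq_eq_Ndq_add_diag, ← DQAux.Fsq_eq_Ndq_add_diag, hinvP]
  rw [hdiag] at h1
  have h4 : Ndq P = Ndq Q + (∑ i, star (Q i i) * Q i i) -
      ((∑ i, star (Q i i) * Q i i) + (star (Q k l) * Q k l + star (Q l k) * Q l k)) :=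
    eq_sub_of_add_eq h1
  rw [h4]
  abel
end
end

section
/- Let n ≥ 2 and let Q be an n×n quaternion Hermitian matrix. Let k ≠ l be indices with |Q_{kl}| = max_{i≠j} |Q_{ij}| and let J be an n×n unitary quaternion matrix that agrees with the identity outside the {k,l} block (J_{ii} = 1 for i ∉ {k,l} and J_{ij} = 0 for every off-diagonal position (i,j) other than (k,l) and (l,k) with {i,j} ≠ {k,l}). Suppose P = Jᴴ Q J satisfies P_{kl} = P_{lk} = 0. Then N(P) = N(Q) − |Q_{kl}|² − |Q_{lk}|² ≤ (1 − 2/(n(n−1))) N(Q), where N(A) := Σ_{i≠j} |A_{ij}|². -/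
/-!
The squared Frobenius norm `Σ_{i,j} |A_ij|² = Re tr(Aᴴ A)` is invariant under unitary
conjugation, even over the noncommutative quaternions, because the real part of a trace is
invariant under cyclic permutation. Since `J` acts as the identity outside the `{k,l}` block, the
diagonal entries of `P` outside `{k,l}` are those of `Q`, and the `{k,l}` block of `P` is the
conjugate of that of `Q` by the unitary block of `J`, so it has the same Frobenius sum. Hence the
mass `|Q_kl|² + |Q_lk|²` that is eliminated moves onto the diagonal. As `Q_kl` is a largest of the
`n(n-1)` off-diagonal entries and `|Q_lk| = |Q_kl|`, it is at least `2 N(Q) / (n(n-1))`.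
-/

open Matrix

noncomputable section

/-- The off-diagonal squared Frobenius sum `N(A) = Σ_{i≠j} |A_ij|²` of a quaternion matrix. -/
noncomputable def Nq {n : ℕ} (A : Matrix (Fin n) (Fin n) (Quaternion ℝ)) : ℝ :=
  ∑ i, ∑ j, if i ≠ j then ‖A i j‖ ^ 2 else 0

open Function
open scoped Quaternion

namespace Quaternion

theorem re_mul_comm (a b : ℍ[ℝ]) : (a * b).re = (b * a).re := by
  simp only [re_mul]; ring

theorem norm_sq_eq_re_star_mul_self (a : ℍ[ℝ]) : ‖a‖ ^ 2 = (star a * a).re := by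
  rw [sq, ← normSq_eq_norm_mul_self, star_mul_self, re_coe]

theorem re_sum {α : Type*} (s : Finset α) (f : α → ℍ[ℝ]) :
    (∑ i ∈ s, f i).re = ∑ i ∈ s, (f i).re :=
  map_sum (QuaternionAlgebra.reₗ (-1 : ℝ) 0 (-1)) f s

end Quaternion

namespace Matrix

variable {ι κ R : Type*} [Fintype ι]

theorem submatrix_mul_of_mul_eq_zero [Fintype κ] [NonUnitalNonAssocSemiring R]
    {e : κ → ι} (he : Injective e) (A B : Matrix ι ι R)
    (hAB : ∀ a b x, x ∉ Set.range e → A (e a) x * B x (e b) = 0) :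
    (A * B).submatrix e e = A.submatrix e e * B.submatrix e e := by
  ext a b
  exact (Fintype.sum_of_injective e he _ _ (hAB a b) fun _ => rfl).symm

theorem re_trace_mul_comm (A B : Matrix ι ι ℍ[ℝ]) :
    (trace (A * B)).re = (trace (B * A)).re := by
  simp only [trace, diag, mul_apply, Quaternion.re_sum]
  rw [Finset.sum_comm]
  exact Finset.sum_congr rfl fun i _ => Finset.sum_congr rfl fun j _ => Quaternion.re_mul_comm _ _

def frobeniusSq (A : Matrix ι ι ℍ[ℝ]) : ℝ :=
  ∑ i, ∑ j, ‖A i j‖ ^ 2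

theorem frobeniusSq_eq_re_trace (A : Matrix ι ι ℍ[ℝ]) :
    frobeniusSq A = (trace (Aᴴ * A)).re := by
  simp only [trace, diag, mul_apply, Quaternion.re_sum, frobeniusSq, conjTranspose_apply]
  rw [Finset.sum_comm]
  exact Finset.sum_congr rfl fun i _ => Finset.sum_congr rfl fun j _ =>
    Quaternion.norm_sq_eq_re_star_mul_self _

theorem frobeniusSq_conjTranspose_mul_mul [DecidableEq ι] {V : Matrix ι ι ℍ[ℝ]} (hV : V * Vᴴ = 1)
    (A : Matrix ι ι ℍ[ℝ]) : frobeniusSq (Vᴴ * A * V) = frobeniusSq A := by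
  have hV' : Aᴴ * A * V * Vᴴ = Aᴴ * A := by rw [Matrix.mul_assoc, hV, Matrix.mul_one]
  have hconj : (Vᴴ * A * V)ᴴ * (Vᴴ * A * V) = Vᴴ * (Aᴴ * A * V) := by
    simp only [conjTranspose_mul, conjTranspose_conjTranspose, Matrix.mul_assoc]
    rw [← Matrix.mul_assoc V, hV, Matrix.one_mul]
  rw [frobeniusSq_eq_re_trace, hconj, re_trace_mul_comm, hV', ← frobeniusSq_eq_re_trace]

end Matrix

theorem Nq_eq_frobeniusSq_sub {n : ℕ} (A : Matrix (Fin n) (Fin n) ℍ[ℝ]) :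
    Nq A = frobeniusSq A - ∑ i, ‖A i i‖ ^ 2 := by
  simp only [Nq, frobeniusSq, ← Finset.sum_sub_distrib, Finset.sum_ite, Finset.sum_const_zero,
    add_zero, Finset.filter_ne, Finset.sum_erase_eq_sub (Finset.mem_univ _)]

theorem Nq_le_of_forall_norm_le {n : ℕ} {A : Matrix (Fin n) (Fin n) ℍ[ℝ]} {c : ℝ}
    (h : ∀ i j, i ≠ j → ‖A i j‖ ≤ c) : Nq A ≤ n * (n - 1) * c ^ 2 := by
  calc Nq A ≤ ∑ i : Fin n, ∑ j : Fin n, if i ≠ j then c ^ 2 else 0 := by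
        refine Finset.sum_le_sum fun i _ => Finset.sum_le_sum fun j _ => ?_
        split_ifs with hij
        · exact pow_le_pow_left₀ (norm_nonneg _) (h i j hij) 2
        · exact le_rfl
    _ = n * (n - 1) * c ^ 2 := by
        simp only [Finset.sum_ite, Finset.sum_const_zero, add_zero, Finset.filter_ne,
          Finset.sum_const, Finset.card_erase_of_mem (Finset.mem_univ _), Finset.card_univ,
          Fintype.card_fin, nsmul_eq_mul]
        rcases Nat.eq_zero_or_pos n with rfl | hn
        · simp
        · rw [Nat.cast_sub hn, Nat.cast_one]; ring

section Givens

variable {n : ℕ} {k l : Fin n} {J : Matrix (Fin n) (Fin n) ℍ[ℝ]}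

theorem apply_eq_zero_of_givens
    (hJo : ∀ i j, i ≠ j → (i, j) ≠ (k, l) → (i, j) ≠ (l, k) → J i j = 0)
    {x c : Fin n} (hx : x = k ∨ x = l) (hck : c ≠ k) (hcl : c ≠ l) : J x c = 0 ∧ J c x = 0 := by
  rcases hx with rfl | rfl <;> constructor <;> apply hJo <;> simp_all [Ne.symm]

theorem conjTranspose_mul_mul_apply_diag_of_givens
    (hJd : ∀ i, i ≠ k → i ≠ l → J i i = 1)
    (hJo : ∀ i j, i ≠ j → (i, j) ≠ (k, l) → (i, j) ≠ (l, k) → J i j = 0)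
    (Q : Matrix (Fin n) (Fin n) ℍ[ℝ]) {i : Fin n} (hik : i ≠ k) (hil : i ≠ l) :
    (Jᴴ * Q * J) i i = Q i i := by
  have hcol : ∀ x, J x i = (1 : Matrix (Fin n) (Fin n) ℍ[ℝ]) x i := by
    intro x
    rcases eq_or_ne x i with rfl | hxi
    · rw [hJd x hik hil, one_apply_eq]
    · rw [one_apply_ne hxi]
      exact hJo x i hxi (by simp [hil]) (by simp [hik])
  simp [mul_apply, hcol, one_apply, apply_ite star]

theorem norm_sq_block_conjTranspose_mul_mul_of_givens (hkl : k ≠ l) (hJu : J * Jᴴ = 1)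
    (hJo : ∀ i j, i ≠ j → (i, j) ≠ (k, l) → (i, j) ≠ (l, k) → J i j = 0)
    (Q : Matrix (Fin n) (Fin n) ℍ[ℝ]) :
    ‖(Jᴴ * Q * J) k k‖ ^ 2 + ‖(Jᴴ * Q * J) k l‖ ^ 2 + ‖(Jᴴ * Q * J) l k‖ ^ 2
        + ‖(Jᴴ * Q * J) l l‖ ^ 2 = ‖Q k k‖ ^ 2 + ‖Q k l‖ ^ 2 + ‖Q l k‖ ^ 2 + ‖Q l l‖ ^ 2 := by
  set e : Fin 2 → Fin n := ![k, l]
  have he : Injective e := by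
    intro a b hab; fin_cases a <;> fin_cases b <;> simp_all [e, hkl.symm]
  have hout : ∀ a x, x ∉ Set.range e → J (e a) x = 0 ∧ J x (e a) = 0 := by
    intro a x hx
    simp only [e, Matrix.range_cons, Matrix.range_empty, Set.union_empty, Set.mem_union,
      Set.mem_singleton_iff, not_or] at hx
    exact apply_eq_zero_of_givens hJo (by fin_cases a <;> simp [e]) hx.1 hx.2
  set U := J.submatrix e e
  have hU : U * Uᴴ = 1 := by
    rw [conjTranspose_submatrix, ← submatrix_mul_of_mul_eq_zero he, hJu, submatrix_one _ he]
    intro a b x hx; rw [(hout a x hx).1, zero_mul]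
  have hblock : (Jᴴ * Q * J).submatrix e e = Uᴴ * Q.submatrix e e * U := by
    rw [submatrix_mul_of_mul_eq_zero he, submatrix_mul_of_mul_eq_zero he, conjTranspose_submatrix]
    · intro a b x hx; rw [conjTranspose_apply, (hout a x hx).2, star_zero, zero_mul]
    · intro a b x hx; rw [(hout b x hx).2, mul_zero]
  have hfrob := congrArg frobeniusSq hblock
  rw [frobeniusSq_conjTranspose_mul_mul hU] at hfrob
  simpa [frobeniusSq, Fin.sum_univ_two, e, add_assoc] using hfrob

theorem Nq_conjTranspose_mul_mul_sub_of_givens (hkl : k ≠ l) (hJu : J * Jᴴ = 1)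
    (hJd : ∀ i, i ≠ k → i ≠ l → J i i = 1)
    (hJo : ∀ i j, i ≠ j → (i, j) ≠ (k, l) → (i, j) ≠ (l, k) → J i j = 0)
    (Q : Matrix (Fin n) (Fin n) ℍ[ℝ]) :
    Nq (Jᴴ * Q * J) - ‖(Jᴴ * Q * J) k l‖ ^ 2 - ‖(Jᴴ * Q * J) l k‖ ^ 2
      = Nq Q - ‖Q k l‖ ^ 2 - ‖Q l k‖ ^ 2 := by
  have hdiag : ∑ i, ‖(Jᴴ * Q * J) i i‖ ^ 2 - ∑ i, ‖Q i i‖ ^ 2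
      = (‖(Jᴴ * Q * J) k k‖ ^ 2 - ‖Q k k‖ ^ 2) + (‖(Jᴴ * Q * J) l l‖ ^ 2 - ‖Q l l‖ ^ 2) := by
    rw [← Finset.sum_sub_distrib]
    refine Finset.sum_eq_add_of_mem k l (Finset.mem_univ _) (Finset.mem_univ _) hkl ?_
    intro i _ hi
    rw [conjTranspose_mul_mul_apply_diag_of_givens hJd hJo Q hi.1 hi.2, sub_self]
  rw [Nq_eq_frobeniusSq_sub, Nq_eq_frobeniusSq_sub, frobeniusSq_conjTranspose_mul_mul hJu]
  linarith [norm_sq_block_conjTranspose_mul_mul_of_givens hkl hJu hJo Q]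

end Givens

theorem sub_two_mul_le_one_sub_two_div_mul {N D x : ℝ} (hD : 0 ≤ D) (hx : 0 ≤ x)
    (hN : N ≤ D * x) : N - 2 * x ≤ (1 - 2 / D) * N := by
  rcases hD.eq_or_lt with rfl | hD
  · rw [div_zero, sub_zero, one_mul]; linarith
  · have : 2 / D * N ≤ 2 * x := by
      rw [div_mul_eq_mul_div, div_le_iff₀ hD]; linarith
    linarith

theorem Nq_givens_elimination_general (n : ℕ)
    (Q J : Matrix (Fin n) (Fin n) (Quaternion ℝ))
    (hQ : Qᴴ = Q) (k l : Fin n) (hkl : k ≠ l)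
    (hmax : ∀ i j, i ≠ j → ‖Q i j‖ ≤ ‖Q k l‖)
    (hJu' : J * Jᴴ = 1)
    (hJd : ∀ i, i ≠ k → i ≠ l → J i i = 1)
    (hJo : ∀ i j, i ≠ j → (i, j) ≠ (k, l) → (i, j) ≠ (l, k) → J i j = 0)
    (hPkl : (Jᴴ * Q * J) k l = 0) (hPlk : (Jᴴ * Q * J) l k = 0) :
    Nq (Jᴴ * Q * J) = Nq Q - ‖Q k l‖ ^ 2 - ‖Q l k‖ ^ 2 ∧
    Nq (Jᴴ * Q * J) ≤ (1 - 2 / ((n : ℝ) * ((n : ℝ) - 1))) * Nq Q := by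
  have hNq := Nq_conjTranspose_mul_mul_sub_of_givens hkl hJu' hJd hJo Q
  rw [hPkl, hPlk, norm_zero, zero_pow two_ne_zero, sub_zero, sub_zero] at hNq
  refine ⟨hNq, ?_⟩
  have hlk : ‖Q l k‖ = ‖Q k l‖ := by rw [← norm_star, ← conjTranspose_apply, hQ]
  have hn : (1 : ℝ) ≤ n := by exact_mod_cast k.pos
  rw [hNq, hlk, sub_sub, ← two_mul]
  exact sub_two_mul_le_one_sub_two_div_mul (mul_nonneg (by linarith) (by linarith)) (sq_nonneg _)
    (Nq_le_of_forall_norm_le hmax)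

/-- Theorem 3.5 (second part): eliminating a maximal-magnitude off-diagonal pair of a
quaternion Hermitian matrix by a unitary matrix supported on the `{k,l}` block gives
`N(P) = N(Q) − |Q_kl|² − |Q_lk|² ≤ (1 − 2/(n(n−1))) N(Q)`. -/
theorem Nq_givens_elimination (n : ℕ) (hn : 2 ≤ n)
    (Q J : Matrix (Fin n) (Fin n) (Quaternion ℝ))
    (hQ : Qᴴ = Q) (k l : Fin n) (hkl : k ≠ l)
    (hmax : ∀ i j, i ≠ j → ‖Q i j‖ ≤ ‖Q k l‖)
    (hJu : Jᴴ * J = 1) (hJu' : J * Jᴴ = 1)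
    (hJd : ∀ i, i ≠ k → i ≠ l → J i i = 1)
    (hJo : ∀ i j, i ≠ j → (i, j) ≠ (k, l) → (i, j) ≠ (l, k) → J i j = 0)
    (hPkl : (Jᴴ * Q * J) k l = 0) (hPlk : (Jᴴ * Q * J) l k = 0) :
    Nq (Jᴴ * Q * J) = Nq Q - ‖Q k l‖ ^ 2 - ‖Q l k‖ ^ 2 ∧
    Nq (Jᴴ * Q * J) ≤ (1 - 2 / ((n : ℝ) * ((n : ℝ) - 1))) * Nq Q :=
  Nq_givens_elimination_general n Q J hQ k l hkl hmax hJu' hJd hJo hPkl hPlk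
end
end

section
/- (Hoffman–Wielandt type inequality for quaternion Hermitian matrices.) Let A and B be n×n quaternion Hermitian matrices admitting unitary diagonalizations A = U diag(a₁, …, a_n) Uᴴ and B = W diag(b₁, …, b_n) Wᴴ, where U, W are unitary quaternion matrices and a₁ ≥ a₂ ≥ … ≥ a_n and b₁ ≥ b₂ ≥ … ≥ b_n are real numbers. Then Σ_{i=1}^n (a_i − b_i)² ≤ Σ_{i,j} |(A − B)_{ij}|². -/
open Matrix

noncomputable section

section HWaux

variable {n : ℕ}

private lemma hw_re_sum (s : Finset (Fin n)) (f : Fin n → Quaternion ℝ) :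
    (∑ i ∈ s, f i).re = ∑ i ∈ s, (f i).re :=
  map_sum (QuaternionAlgebra.reₗ (-1 : ℝ) (0 : ℝ) (-1 : ℝ)) f s

private lemma hw_diag_XHX (X : Matrix (Fin n) (Fin n) (Quaternion ℝ)) (j : Fin n) :
    ((Xᴴ * X) j j).re = ∑ i, ‖X i j‖ ^ 2 := by
  rw [Matrix.mul_apply, hw_re_sum]
  refine Finset.sum_congr rfl fun i _ => ?_
  rw [conjTranspose_apply, Quaternion.star_mul_self]
  simp [Quaternion.normSq_eq_norm_mul_self, sq]

private lemma hw_diag_XXH (X : Matrix (Fin n) (Fin n) (Quaternion ℝ)) (i : Fin n) :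
    ((X * Xᴴ) i i).re = ∑ j, ‖X i j‖ ^ 2 := by
  rw [Matrix.mul_apply, hw_re_sum]
  refine Finset.sum_congr rfl fun j _ => ?_
  rw [conjTranspose_apply, Quaternion.self_mul_star]
  simp [Quaternion.normSq_eq_norm_mul_self, sq]

private lemma hw_frob_col (X : Matrix (Fin n) (Fin n) (Quaternion ℝ)) :
    ∑ i, ∑ j, ‖X i j‖ ^ 2 = ∑ j, ((Xᴴ * X) j j).re := by
  rw [Finset.sum_comm]
  exact Finset.sum_congr rfl fun j _ => (hw_diag_XHX X j).symm

private lemma hw_frob_row (X : Matrix (Fin n) (Fin n) (Quaternion ℝ)) :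
    ∑ i, ∑ j, ‖X i j‖ ^ 2 = ∑ i, ((X * Xᴴ) i i).re :=
  Finset.sum_congr rfl fun i _ => (hw_diag_XXH X i).symm

private lemma hw_frobL (U X : Matrix (Fin n) (Fin n) (Quaternion ℝ)) (hU : Uᴴ * U = 1) :
    ∑ i, ∑ j, ‖(U * X) i j‖ ^ 2 = ∑ i, ∑ j, ‖X i j‖ ^ 2 := by
  rw [hw_frob_col, hw_frob_col X]
  have h : (U * X)ᴴ * (U * X) = Xᴴ * X := by
    rw [conjTranspose_mul]
    calc Xᴴ * Uᴴ * (U * X) = Xᴴ * (Uᴴ * U) * X := by simp only [Matrix.mul_assoc]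
      _ = Xᴴ * X := by rw [hU, Matrix.mul_one]
  rw [h]

private lemma hw_frobR (W X : Matrix (Fin n) (Fin n) (Quaternion ℝ)) (hW : W * Wᴴ = 1) :
    ∑ i, ∑ j, ‖(X * W) i j‖ ^ 2 = ∑ i, ∑ j, ‖X i j‖ ^ 2 := by
  rw [hw_frob_row, hw_frob_row X]
  have h : (X * W) * (X * W)ᴴ = X * Xᴴ := by
    rw [conjTranspose_mul]
    calc X * W * (Wᴴ * Xᴴ) = X * (W * Wᴴ) * Xᴴ := by simp only [Matrix.mul_assoc]
      _ = X * Xᴴ := by rw [hW, Matrix.mul_one]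
  rw [h]

private lemma hw_ds_key (c : Fin n → Fin n → ℝ) (h0 : ∀ i j, 0 ≤ c i j)
    (hr : ∀ i, ∑ j, c i j = 1) (hco : ∀ j, ∑ i, c i j = 1)
    (a b : Fin n → ℝ) (ha : Antitone a) (hb : Antitone b) :
    ∑ i, ∑ j, c i j * (a i * b j) ≤ ∑ i, a i * b i := by
  have hmono : Monovary a b := by
    intro i j hb'
    rcases le_total i j with h | h
    · exact absurd (hb h) (not_le.2 hb')
    · exact ha h
  have hc : Matrix.of c ∈ doublyStochastic ℝ (Fin n) :=
    mem_doublyStochastic_iff_sum.mpr ⟨h0, hr, hco⟩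
  obtain ⟨w, hw0, hw1, hw2⟩ := exists_eq_sum_perm_of_mem_doublyStochastic hc
  have hperm : ∀ σ : Equiv.Perm (Fin n),
      ∑ i, ∑ j, (σ.permMatrix ℝ) i j * (a i * b j) = ∑ i, a i * b (σ i) := by
    intro σ
    refine Finset.sum_congr rfl fun i _ => ?_
    rw [Finset.sum_eq_single (σ i)]
    · simp [Equiv.Perm.permMatrix, PEquiv.toMatrix, Equiv.toPEquiv]
    · intro j _ hj
      simp [Equiv.Perm.permMatrix, PEquiv.toMatrix, Equiv.toPEquiv, Ne.symm hj]
    · simp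
  have hcij : ∀ i j, c i j = ∑ σ : Equiv.Perm (Fin n), w σ * (σ.permMatrix ℝ) i j := by
    intro i j
    have := congrArg (fun X : Matrix (Fin n) (Fin n) ℝ => X i j) hw2
    simpa [Matrix.sum_apply] using this.symm
  calc ∑ i, ∑ j, c i j * (a i * b j)
      = ∑ i, ∑ j, ∑ σ : Equiv.Perm (Fin n), w σ * ((σ.permMatrix ℝ) i j * (a i * b j)) := by
        simp only [hcij, Finset.sum_mul, mul_assoc]
    _ = ∑ i, ∑ σ : Equiv.Perm (Fin n), ∑ j, w σ * ((σ.permMatrix ℝ) i j * (a i * b j)) :=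
        Finset.sum_congr rfl fun i _ => Finset.sum_comm
    _ = ∑ σ : Equiv.Perm (Fin n), ∑ i, ∑ j, w σ * ((σ.permMatrix ℝ) i j * (a i * b j)) :=
        Finset.sum_comm
    _ = ∑ σ : Equiv.Perm (Fin n), w σ * ∑ i, ∑ j, (σ.permMatrix ℝ) i j * (a i * b j) := by
        simp only [Finset.mul_sum]
    _ = ∑ σ : Equiv.Perm (Fin n), w σ * ∑ i, a i * b (σ i) :=
        Finset.sum_congr rfl fun σ _ => by rw [hperm σ]
    _ ≤ ∑ σ : Equiv.Perm (Fin n), w σ * ∑ i, a i * b i :=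
        Finset.sum_le_sum fun σ _ =>
          mul_le_mul_of_nonneg_left (hmono.sum_mul_comp_perm_le_sum_mul) (hw0 σ)
    _ = ∑ i, a i * b i := by rw [← Finset.sum_mul, hw1, one_mul]

end HWaux

/-- Hoffman–Wielandt type inequality for quaternion Hermitian matrices: if `A` and `B`
are unitarily diagonalizable with decreasingly ordered real eigenvalues `a` and `b`, then
`Σ (a_i − b_i)² ≤ ‖A − B‖_F²`. -/
theorem hoffman_wielandt_quaternion (n : ℕ)
    (A B U W : Matrix (Fin n) (Fin n) (Quaternion ℝ)) (a b : Fin n → ℝ)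
    (hA : Aᴴ = A) (hB : Bᴴ = B)
    (hU : Uᴴ * U = 1) (hU' : U * Uᴴ = 1)
    (hW : Wᴴ * W = 1) (hW' : W * Wᴴ = 1)
    (ha : Antitone a) (hb : Antitone b)
    (hAdec : A = U * Matrix.diagonal (fun i => ((a i : ℝ) : Quaternion ℝ)) * Uᴴ)
    (hBdec : B = W * Matrix.diagonal (fun i => ((b i : ℝ) : Quaternion ℝ)) * Wᴴ) :
    ∑ i, (a i - b i) ^ 2 ≤ ∑ i, ∑ j, ‖(A - B) i j‖ ^ 2 := by
  classical
  set V : Matrix (Fin n) (Fin n) (Quaternion ℝ) := Uᴴ * W with hVdef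
  set M : Matrix (Fin n) (Fin n) (Quaternion ℝ) := Uᴴ * (A - B) * W with hMdef
  have hVH : Vᴴ = Wᴴ * U := by
    rw [hVdef, conjTranspose_mul, conjTranspose_conjTranspose]
  have hVV' : V * Vᴴ = 1 := by
    rw [hVH, hVdef]
    calc Uᴴ * W * (Wᴴ * U) = Uᴴ * (W * Wᴴ) * U := by simp only [Matrix.mul_assoc]
      _ = 1 := by rw [hW', Matrix.mul_one, hU]
  have hV'V : Vᴴ * V = 1 := by
    rw [hVH, hVdef]
    calc Wᴴ * U * (Uᴴ * W) = Wᴴ * (U * Uᴴ) * W := by simp only [Matrix.mul_assoc]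
      _ = 1 := by rw [hU', Matrix.mul_one, hW]
  -- row and column sums of c i j = ‖V i j‖²
  have hrow : ∀ i, ∑ j, ‖V i j‖ ^ 2 = 1 := by
    intro i
    rw [← hw_diag_XXH, hVV', Matrix.one_apply_eq]
    rfl
  have hcol : ∀ j, ∑ i, ‖V i j‖ ^ 2 = 1 := by
    intro j
    rw [← hw_diag_XHX, hV'V, Matrix.one_apply_eq]
    rfl
  -- entries of M
  have hM1 : M = Matrix.diagonal (fun i => ((a i : ℝ) : Quaternion ℝ)) * V
      - V * Matrix.diagonal (fun i => ((b i : ℝ) : Quaternion ℝ)) := by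
    rw [hMdef, Matrix.mul_sub, Matrix.sub_mul]
    congr 1
    · rw [hAdec, hVdef]
      simp only [Matrix.mul_assoc]
      rw [← Matrix.mul_assoc Uᴴ U, hU, Matrix.one_mul]
    · rw [hBdec, hVdef]
      simp only [Matrix.mul_assoc]
      rw [hW, Matrix.mul_one]
  have hMentry : ∀ i j, M i j = (a i - b j) • V i j := by
    intro i j
    rw [hM1, Matrix.sub_apply, Matrix.diagonal_mul, Matrix.mul_diagonal,
      Quaternion.coe_mul_eq_smul, Quaternion.mul_coe_eq_smul, sub_smul]
  -- Frobenius norm identity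
  have hAB : A - B = U * (M * Wᴴ) := by
    rw [hMdef]
    calc A - B = (U * Uᴴ) * (A - B) * (W * Wᴴ) := by
          rw [hU', hW', Matrix.one_mul, Matrix.mul_one]
      _ = U * (Uᴴ * (A - B) * W * Wᴴ) := by simp only [Matrix.mul_assoc]
      _ = U * (Uᴴ * (A - B) * W * Wᴴ) := rfl
  have hfrob : ∑ i, ∑ j, ‖(A - B) i j‖ ^ 2 = ∑ i, ∑ j, ‖V i j‖ ^ 2 * (a i - b j) ^ 2 := by
    rw [hAB, hw_frobL U (M * Wᴴ) hU,
      hw_frobR Wᴴ M (by rw [conjTranspose_conjTranspose]; exact hW)]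
    refine Finset.sum_congr rfl fun i _ => Finset.sum_congr rfl fun j _ => ?_
    rw [hMentry i j, norm_smul, mul_pow, Real.norm_eq_abs, sq_abs, mul_comm]
  rw [hfrob]
  -- reduce to the real rearrangement inequality
  have key := hw_ds_key (fun i j => ‖V i j‖ ^ 2) (fun i j => by positivity) hrow hcol a b ha hb
  have e1 : ∑ i, ∑ j, ‖V i j‖ ^ 2 * (a i) ^ 2 = ∑ i, (a i) ^ 2 := by
    refine Finset.sum_congr rfl fun i _ => ?_
    rw [← Finset.sum_mul, hrow, one_mul]
  have e2 : ∑ i, ∑ j, ‖V i j‖ ^ 2 * (b j) ^ 2 = ∑ j, (b j) ^ 2 := by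
    rw [Finset.sum_comm]
    refine Finset.sum_congr rfl fun j _ => ?_
    rw [← Finset.sum_mul, hcol, one_mul]
  have expand : ∑ i, ∑ j, ‖V i j‖ ^ 2 * (a i - b j) ^ 2
      = ∑ i, (a i) ^ 2 + ∑ j, (b j) ^ 2 - 2 * ∑ i, ∑ j, ‖V i j‖ ^ 2 * (a i * b j) := by
    rw [← e1, ← e2]
    rw [← Finset.sum_add_distrib, Finset.mul_sum, ← Finset.sum_sub_distrib]
    refine Finset.sum_congr rfl fun i _ => ?_
    rw [← Finset.sum_add_distrib, Finset.mul_sum, ← Finset.sum_sub_distrib]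
    refine Finset.sum_congr rfl fun j _ => ?_
    ring
  have lhs_expand : ∑ i, (a i - b i) ^ 2
      = ∑ i, (a i) ^ 2 + ∑ i, (b i) ^ 2 - 2 * ∑ i, a i * b i := by
    rw [← Finset.sum_add_distrib, Finset.mul_sum, ← Finset.sum_sub_distrib]
    refine Finset.sum_congr rfl fun i _ => ?_
    ring
  rw [expand, lhs_expand]
  linarith

end
end

section
/- Let Q̂ = Q_st + Q_I ε be an n×n dual quaternion Hermitian matrix whose standard part Q_st is diagonal with real diagonal entries d₁, …, d_n that are pairwise distinct. For each i, define the dual quaternion vector v̂_i by (v̂_i)_i = 1 and (v̂_i)_j = ((Q_I)_{ji} / (d_i − d_j)) ε for j ≠ i. Then for each i, the dual number d_i + (Q_I)_{ii} ε is an eigenvalue of Q̂ with eigenvector v̂_i; that is, Q̂ v̂_i = (d_i + (Q_I)_{ii} ε) v̂_i (note (Q_I)_{ii} is real since Q_I is Hermitian). -/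
open Matrix

noncomputable section

/-- Lemma 3.6: if `Q̂ = diag(d) + QI ε` is a dual quaternion Hermitian matrix whose standard
part is diagonal with pairwise distinct real entries, then for each `i` the dual number
`d_i + (QI)_ii ε` is an eigenvalue of `Q̂` with the explicitly given eigenvector `v̂_i`. -/
theorem diagonal_standard_part_eigenpairs (n : ℕ) (d : Fin n → ℝ)
    (QI : Matrix (Fin n) (Fin n) (Quaternion ℝ))
    (hd : ∀ i j, i ≠ j → d i ≠ d j) (hQI : QIᴴ = QI) :
    ∀ i : Fin n,
      let Qhat := toDualQ (Matrix.diagonal fun i => ((d i : ℝ) : Quaternion ℝ)) QI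
      let v : Fin n → DualNumber (Quaternion ℝ) := fun j =>
        if j = i then 1
        else TrivSqZeroExt.inr (QI j i / ((d i - d j : ℝ) : Quaternion ℝ))
      Qhat.mulVec v =
        fun j => (TrivSqZeroExt.inl ((d i : ℝ) : Quaternion ℝ)
          + TrivSqZeroExt.inr (QI i i)) * v j := by
  intro i
  funext j
  apply TrivSqZeroExt.ext
  · simp only [Matrix.mulVec, dotProduct, toDualQ, Matrix.of_apply,
      TrivSqZeroExt.fst_sum, TrivSqZeroExt.fst_mul, TrivSqZeroExt.fst_add,
      TrivSqZeroExt.fst_inl, TrivSqZeroExt.fst_inr, TrivSqZeroExt.fst_one, add_zero]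
    simp only [apply_ite TrivSqZeroExt.fst, TrivSqZeroExt.fst_one, TrivSqZeroExt.fst_inr]
    simp [Matrix.diagonal, mul_ite, Finset.sum_ite_eq]
    by_cases h : j = i <;> simp [h]
  · simp only [Matrix.mulVec, dotProduct, toDualQ, Matrix.of_apply,
      TrivSqZeroExt.snd_sum, TrivSqZeroExt.snd_mul, TrivSqZeroExt.snd_add,
      TrivSqZeroExt.snd_inl, TrivSqZeroExt.snd_inr, TrivSqZeroExt.fst_add,
      TrivSqZeroExt.fst_inl, TrivSqZeroExt.fst_inr, add_zero, zero_add]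
    simp only [apply_ite TrivSqZeroExt.fst, apply_ite TrivSqZeroExt.snd,
      TrivSqZeroExt.fst_one, TrivSqZeroExt.snd_one, TrivSqZeroExt.fst_inr,
      TrivSqZeroExt.snd_inr]
    simp [Matrix.diagonal, smul_ite, mul_ite, Finset.sum_add_distrib, Finset.sum_ite_eq,
      smul_eq_mul, MulOpposite.smul_eq_mul_unop]
    rcases eq_or_ne j i with h | h
    · subst h
      rw [Finset.sum_eq_zero]
      · simp
      · intro x _
        by_cases hx : x = j
        · simp [hx]
        · simp [hx, Ne.symm hx]
    · have hdd : d i ≠ d j := hd i j (Ne.symm h)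
      have hc : ((d i : ℝ) : Quaternion ℝ) - ((d j : ℝ) : Quaternion ℝ) ≠ 0 :=
        sub_ne_zero.mpr (fun e => hdd (Quaternion.coe_injective e))
      rw [Finset.sum_eq_single j]
      · rw [if_neg h, if_pos rfl, if_neg h, if_neg h, add_zero]
        have hcm : QI j i * (((d i : ℝ) : Quaternion ℝ) - ((d j : ℝ) : Quaternion ℝ))
            = (((d i : ℝ) : Quaternion ℝ) - ((d j : ℝ) : Quaternion ℝ)) * QI j i := by
          rw [mul_sub, sub_mul, (Quaternion.coe_commute (d i) (QI j i)).eq,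
            (Quaternion.coe_commute (d j) (QI j i)).eq]
        have key : (((d i : ℝ) : Quaternion ℝ) - ((d j : ℝ) : Quaternion ℝ))
            * (QI j i / (((d i : ℝ) : Quaternion ℝ) - ((d j : ℝ) : Quaternion ℝ))) = QI j i := by
          rw [div_eq_mul_inv, ← mul_assoc, ← hcm, mul_assoc, mul_inv_cancel₀ hc, mul_one]
        calc ↑(d j) * (QI j i / (↑(d i) - ↑(d j))) + QI j i
            = ↑(d j) * (QI j i / (↑(d i) - ↑(d j)))
              + (↑(d i) - ↑(d j)) * (QI j i / (↑(d i) - ↑(d j))) := by rw [key]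
          _ = ↑(d i) * (QI j i / (↑(d i) - ↑(d j))) := by rw [sub_mul]; abel
      · intro b _ hb
        by_cases h' : b = i <;> simp [h', Ne.symm hb]
      · simp
end
end

section
/- Let 0 < η ≤ 1 and 0 < ν < 1, and let Q_I be an n×n quaternion Hermitian matrix with max_{j≠k} |(Q_I)_{jk}| ≤ n η and max_j |(Q_I)_{jj}| ≤ 2 ‖Q_I‖_F, where ‖Q_I‖_F = (Σ_{i,j} |(Q_I)_{ij}|²)^{1/2}. Let V be an n×n unitary quaternion matrix with max_{i,j} |(I − V)_{ij}| ≤ η^ν/(6n²), write v_i for the i-th column of V, and set λ_i^d := v_iᴴ Q_I v_i (a real number). Then max_{1≤i≤n} |λ_i^d − (Q_I)_{ii}| ≤ η + (‖Q_I‖_F / n²) · η^ν. -/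
open Matrix

noncomputable section

set_option maxHeartbeats 1600000 in
/-- The dual-part eigenvalue estimate from the proof of Theorem 3.9: with
`max_{j≠k} |(Q_I)_{jk}| ≤ nη`, `max_j |(Q_I)_{jj}| ≤ 2‖Q_I‖_F`, and a unitary `V` with
`max_{i,j} |(I − V)_{ij}| ≤ η^ν/(6n²)`, the Rayleigh quotients `λ_i^d = v_iᴴ Q_I v_i`
satisfy `max_i |λ_i^d − (Q_I)_{ii}| ≤ η + (‖Q_I‖_F/n²) η^ν`. -/
theorem dual_part_eigenvalue_estimate (n : ℕ) [NeZero n] (η ν : ℝ)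
    (hη0 : 0 < η) (hη1 : η ≤ 1) (hν0 : 0 < ν) (hν1 : ν < 1)
    (QI V : Matrix (Fin n) (Fin n) (Quaternion ℝ)) (lam : Fin n → ℝ)
    (hQI : QIᴴ = QI)
    (hoff : ∀ j k, j ≠ k → ‖QI j k‖ ≤ (n : ℝ) * η)
    (hdiagbd : ∀ j, ‖QI j j‖ ≤ 2 * Real.sqrt (∑ i, ∑ j, ‖QI i j‖ ^ 2))
    (hV : Vᴴ * V = 1) (hV' : V * Vᴴ = 1)
    (hVI : ∀ i j, ‖((1 : Matrix (Fin n) (Fin n) (Quaternion ℝ)) - V) i j‖ ≤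
      η ^ ν / (6 * (n : ℝ) ^ 2))
    (hlam : ∀ i, ((lam i : ℝ) : Quaternion ℝ) = ∑ j, ∑ k, star (V j i) * QI j k * V k i) :
    ∀ i, ‖((lam i : ℝ) : Quaternion ℝ) - QI i i‖ ≤
      η + Real.sqrt (∑ i, ∑ j, ‖QI i j‖ ^ 2) / (n : ℝ) ^ 2 * η ^ ν := by
  intro i
  obtain ⟨F, hFdef⟩ : ∃ x, x = Real.sqrt (∑ i, ∑ j, ‖QI i j‖ ^ 2) := ⟨_, rfl⟩
  obtain ⟨ε, hεdef⟩ : ∃ x, x = η ^ ν / (6 * (n:ℝ)^2) := ⟨_, rfl⟩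
  obtain ⟨E, hEdef⟩ : ∃ x, x = (1 : Matrix (Fin n) (Fin n) (Quaternion ℝ)) - V := ⟨_, rfl⟩
  rw [← hFdef]
  have hF0 : 0 ≤ F := hFdef ▸ Real.sqrt_nonneg _
  have hn1 : (1:ℝ) ≤ (n:ℝ) := by exact_mod_cast Nat.one_le_iff_ne_zero.mpr (NeZero.ne n)
  have hn0 : (0:ℝ) < (n:ℝ) := lt_of_lt_of_le one_pos hn1
  have hε0 : 0 ≤ ε := by rw [hεdef]; positivity
  have hrpow1 : η ^ ν ≤ 1 := Real.rpow_le_one hη0.le hη1 hν0.le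
  have hQF : ∀ j k, ‖QI j k‖ ≤ F := by
    intro j k
    have h1 : ‖QI j k‖ ^ 2 ≤ ∑ i, ∑ j, ‖QI i j‖ ^ 2 := by
      have h2 : ‖QI j k‖ ^ 2 ≤ ∑ l, ‖QI j l‖ ^ 2 :=
        Finset.single_le_sum (f := fun l => ‖QI j l‖ ^ 2) (fun l _ => sq_nonneg _)
          (Finset.mem_univ k)
      have h3 : ∑ l, ‖QI j l‖ ^ 2 ≤ ∑ i, ∑ j, ‖QI i j‖ ^ 2 :=
        Finset.single_le_sum (f := fun l => ∑ m, ‖QI l m‖ ^ 2)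
          (fun l _ => Finset.sum_nonneg fun _ _ => sq_nonneg _) (Finset.mem_univ j)
      linarith
    rw [hFdef]
    calc ‖QI j k‖ = Real.sqrt (‖QI j k‖ ^ 2) := (Real.sqrt_sq (norm_nonneg _)).symm
      _ ≤ _ := Real.sqrt_le_sqrt h1
  have hEb : ∀ j k, ‖E j k‖ ≤ ε := by rw [hEdef, hεdef]; exact hVI
  have hdF : ‖QI i i‖ ≤ 2 * F := by rw [hFdef]; exact hdiagbd i
  have hVE : ∀ j k : Fin n, V j k = (if j = k then (1:Quaternion ℝ) else 0) - E j k := by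
    intro j k; simp [hEdef, Matrix.one_apply, Matrix.sub_apply]
  have expand : ∀ j k : Fin n, star (V j i) * QI j k * V k i =
      (if j = i then (1:Quaternion ℝ) else 0) * QI j k * (if k = i then 1 else 0)
      - (if j = i then 1 else 0) * QI j k * E k i
      - star (E j i) * QI j k * (if k = i then 1 else 0)
      + star (E j i) * QI j k * E k i := by
    intro j k
    rw [hVE j i, hVE k i, star_sub]
    have h : star (if j = i then (1:Quaternion ℝ) else 0) = if j = i then 1 else 0 := by
      split <;> simp
    rw [h]; noncomm_ring
  have e1 : ∑ j, ∑ k, (if j = i then (1:Quaternion ℝ) else 0) * QI j k *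
      (if k = i then 1 else 0) = QI i i := by
    simp [ite_mul, mul_ite, Finset.sum_ite_eq', Finset.mem_univ]
  have e2 : ∑ j, ∑ k, (if j = i then (1:Quaternion ℝ) else 0) * QI j k * E k i =
      ∑ k, QI i k * E k i := by
    rw [Finset.sum_comm]
    simp [ite_mul, Finset.sum_ite_eq', Finset.mem_univ]
  have e3 : ∑ j, ∑ k, star (E j i) * QI j k * (if k = i then (1:Quaternion ℝ) else 0) =
      ∑ j, star (E j i) * QI j i := by
    simp [mul_ite, Finset.sum_ite_eq', Finset.mem_univ]
  have key : ((lam i : ℝ) : Quaternion ℝ) - QI i i =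
      (∑ j, ∑ k, star (E j i) * QI j k * E k i)
      - (∑ j, star (E j i) * QI j i) - (∑ k, QI i k * E k i) := by
    rw [hlam i]
    simp_rw [expand]
    simp only [Finset.sum_add_distrib, Finset.sum_sub_distrib]
    rw [e1, e2, e3]
    abel
  rw [key]
  have b2 : ‖∑ j, ∑ k, star (E j i) * QI j k * E k i‖ ≤ (n:ℝ)^2 * (ε * F * ε) := by
    calc ‖∑ j, ∑ k, star (E j i) * QI j k * E k i‖
        ≤ ∑ j, ∑ k, ‖star (E j i) * QI j k * E k i‖ := by
          refine (norm_sum_le _ _).trans (Finset.sum_le_sum fun j _ => norm_sum_le _ _)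
      _ ≤ ∑ j : Fin n, ∑ k : Fin n, ε * F * ε := by
          refine Finset.sum_le_sum fun j _ => Finset.sum_le_sum fun k _ => ?_
          rw [norm_mul, norm_mul, norm_star]
          gcongr
          exacts [hEb j i, hQF j k, hEb k i]
      _ = (n:ℝ)^2 * (ε * F * ε) := by
          simp only [Finset.sum_const, Finset.card_univ, Fintype.card_fin, nsmul_eq_mul]
          ring
  have termbd : ∀ (f : Fin n → Quaternion ℝ),
      (∀ j, ‖f j‖ ≤ (if j = i then ε * (2*F) else 0) + ε * ((n:ℝ)*η)) →
      ‖∑ j, f j‖ ≤ ε * (2*F) + (n:ℝ) * (ε * ((n:ℝ)*η)) := by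
    intro f hf
    calc ‖∑ j, f j‖ ≤ ∑ j, ‖f j‖ := norm_sum_le _ _
      _ ≤ ∑ j, ((if j = i then ε * (2*F) else 0) + ε * ((n:ℝ)*η)) :=
          Finset.sum_le_sum fun j _ => hf j
      _ = ε * (2*F) + (n:ℝ) * (ε * ((n:ℝ)*η)) := by
          rw [Finset.sum_add_distrib, Finset.sum_ite_eq' Finset.univ i (fun _ => ε * (2*F))]
          simp only [Finset.mem_univ, if_true, Finset.sum_const, Finset.card_univ,
            Fintype.card_fin, nsmul_eq_mul]
  have hεnη : 0 ≤ ε * ((n:ℝ)*η) := by positivity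
  have b1 : ‖∑ j, star (E j i) * QI j i‖ ≤ ε * (2*F) + (n:ℝ) * (ε * ((n:ℝ)*η)) := by
    refine termbd _ fun j => ?_
    rw [norm_mul, norm_star]
    by_cases hj : j = i
    · simp only [if_pos hj]
      have hd : ‖QI j i‖ ≤ 2 * F := by rw [hj]; exact hdF
      have h : ‖E j i‖ * ‖QI j i‖ ≤ ε * (2*F) :=
        mul_le_mul (hEb j i) hd (norm_nonneg _) hε0
      linarith
    · simp only [if_neg hj, zero_add]
      have h : ‖E j i‖ * ‖QI j i‖ ≤ ε * ((n:ℝ)*η) := by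
        gcongr; exacts [hEb j i, hoff j i hj]
      linarith
  have b3 : ‖∑ k, QI i k * E k i‖ ≤ ε * (2*F) + (n:ℝ) * (ε * ((n:ℝ)*η)) := by
    refine termbd _ fun k => ?_
    rw [norm_mul]
    by_cases hk : k = i
    · simp only [if_pos hk]
      have hd : ‖QI i k‖ ≤ 2 * F := by rw [hk]; exact hdF
      have h : ‖QI i k‖ * ‖E k i‖ ≤ (2*F) * ε :=
        mul_le_mul hd (hEb k i) (norm_nonneg _) (by linarith)
      nlinarith
    · simp only [if_neg hk, zero_add]
      have h : ‖QI i k‖ * ‖E k i‖ ≤ ((n:ℝ)*η) * ε := by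
        gcongr; exacts [hoff i k (fun h => hk h.symm), hEb k i]
      nlinarith
  have total : ‖(∑ j, ∑ k, star (E j i) * QI j k * E k i)
      - (∑ j, star (E j i) * QI j i) - (∑ k, QI i k * E k i)‖ ≤
      (n:ℝ)^2 * (ε * F * ε) + 2 * (ε * (2*F) + (n:ℝ) * (ε * ((n:ℝ)*η))) := by
    have t1 := norm_sub_le ((∑ j, ∑ k, star (E j i) * QI j k * E k i)
      - (∑ j, star (E j i) * QI j i)) (∑ k, QI i k * E k i)
    have t2 := norm_sub_le (∑ j, ∑ k, star (E j i) * QI j k * E k i)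
      (∑ j, star (E j i) * QI j i)
    linarith
  refine total.trans ?_
  have hn2e : (n:ℝ)^2 * ε = η ^ ν / 6 := by
    rw [hεdef]; field_simp
  have hFn : F / (n:ℝ)^2 * η ^ ν = 6 * (ε * F) := by
    rw [hεdef]; field_simp
  rw [hFn]
  nlinarith [mul_nonneg hε0 hF0, mul_nonneg hε0 hη0.le, hn2e,
    mul_le_of_le_one_right (mul_nonneg hε0 hF0) hrpow1,
    mul_le_of_le_one_left hη0.le hrpow1]
end
end

section
/- Let n ≥ 2, let S be an n×n real diagonal matrix (regarded as a quaternion matrix) with diagonal entries s₁, …, s_n, let R and B be n×n quaternion Hermitian matrices with max_{i,j} |R_{ij}| ≤ η, and fix indices k < l with s_k ≠ s_l; set r = 2/|s_k − s_l|. Define the quaternion matrix D by D_{kl} = B_{kl}/(s_l − s_k), D_{lk} = B_{lk}/(s_k − s_l), and D_{ij} = 0 for all other positions. Then the matrix B' := (S + R) D + Dᴴ (S + R) + B satisfies |B'_{kl}| ≤ r η |B_{kl}|, and |B'_{ij}| ≤ |B_{ij}| + r η |B_{kl}| for every position (i,j) with {i,j} ≠ {k,l}. -/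
open Matrix

noncomputable section

private lemma sum_support_pair {n : ℕ} (k l : Fin n) (h : k ≠ l)
    (f : Fin n → Quaternion ℝ) (hf : ∀ m, m ≠ k → m ≠ l → f m = 0) :
    ∑ m, f m = f k + f l := by
  rw [← Finset.sum_pair h]
  refine (Finset.sum_subset (Finset.subset_univ _) ?_).symm
  intro x _ hx
  simp only [Finset.mem_insert, Finset.mem_singleton, not_or] at hx
  exact hf x hx.1 hx.2

/-- The dual-part update estimate in STEP 2 of the three-step Jacobi algorithm: with `S`
real diagonal, `R` a small Hermitian remainder (`|R_ij| ≤ η`), `B` Hermitian,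
`r = 2/|s_k − s_l|`, and `D` the dual Givens correction supported at positions
`(k,l)` and `(l,k)`, the updated dual part `B' = (S+R)D + Dᴴ(S+R) + B` satisfies
`|B'_kl| ≤ rη|B_kl|` and `|B'_ij| ≤ |B_ij| + rη|B_kl|` at all positions with
`{i,j} ≠ {k,l}`. -/
theorem step2_dual_update_estimate (n : ℕ) (hn : 2 ≤ n) (s : Fin n → ℝ)
    (R B : Matrix (Fin n) (Fin n) (Quaternion ℝ)) (η : ℝ)
    (hR : Rᴴ = R) (hB : Bᴴ = B)
    (hRbd : ∀ i j, ‖R i j‖ ≤ η)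
    (k l : Fin n) (hkl : k < l) (hs : s k ≠ s l) :
    let S : Matrix (Fin n) (Fin n) (Quaternion ℝ) :=
      Matrix.diagonal fun i => ((s i : ℝ) : Quaternion ℝ)
    let r : ℝ := 2 / |s k - s l|
    let D : Matrix (Fin n) (Fin n) (Quaternion ℝ) := Matrix.of fun i j =>
      if i = k ∧ j = l then B k l / ((s l - s k : ℝ) : Quaternion ℝ)
      else if i = l ∧ j = k then B l k / ((s k - s l : ℝ) : Quaternion ℝ)
      else 0
    let B' := (S + R) * D + Dᴴ * (S + R) + B
    ‖B' k l‖ ≤ r * η * ‖B k l‖ ∧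
    ∀ i j, ¬((i = k ∧ j = l) ∨ (i = l ∧ j = k)) →
      ‖B' i j‖ ≤ ‖B i j‖ + r * η * ‖B k l‖ := by
  intro S r D B'
  have hklne : k ≠ l := ne_of_lt hkl
  have hc0 : (s l - s k) ≠ 0 := sub_ne_zero.mpr (Ne.symm hs)
  have hc0' : (s k - s l) ≠ 0 := sub_ne_zero.mpr hs
  have hη : 0 ≤ η := le_trans (norm_nonneg _) (hRbd k k)
  set A : ℝ := |s k - s l| with hA
  have hA0 : 0 < A := abs_pos.mpr hc0'
  have hAsymm : |s l - s k| = A := abs_sub_comm _ _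
  have hdiv : ∀ (q : Quaternion ℝ) (t : ℝ), q / ((t : ℝ) : Quaternion ℝ) = t⁻¹ • q := by
    intro q t
    rw [div_eq_mul_inv, ← Quaternion.coe_inv, Quaternion.mul_coe_eq_smul]
  have hBstar : ∀ i j, star (B i j) = B j i := by
    intro i j; conv_rhs => rw [← hB]
    rfl
  have hDkl : D k l = (s l - s k)⁻¹ • B k l := by
    simp only [D, Matrix.of_apply, if_pos (And.intro rfl rfl)]
    exact hdiv _ _
  have hstar_smul : ∀ (t : ℝ) (q : Quaternion ℝ), star (t • q) = t • star q := by
    intro t q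
    rw [← Quaternion.coe_mul_eq_smul, StarMul.star_mul, Quaternion.star_coe,
      Quaternion.mul_coe_eq_smul, ← Quaternion.coe_mul_eq_smul]
  have hDlk : D l k = (s k - s l)⁻¹ • B l k := by
    have e : D l k = if l = k ∧ k = l then B k l / ((s l - s k : ℝ) : Quaternion ℝ)
        else if l = l ∧ k = k then B l k / ((s k - s l : ℝ) : Quaternion ℝ) else 0 := rfl
    rw [e, if_neg (fun h => hklne h.2), if_pos (And.intro rfl rfl)]
    exact hdiv _ _
  have hD0 : ∀ i j, ¬(i = k ∧ j = l) → ¬(i = l ∧ j = k) → D i j = 0 := by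
    intro i j h1 h2
    simp only [D, Matrix.of_apply, if_neg h1, if_neg h2]
  have hB'e : ∀ i j, B' i j =
      (S + R) i k * D k j + (S + R) i l * D l j
      + (star (D k i) * (S + R) k j + star (D l i) * (S + R) l j) + B i j := by
    intro i j
    have h1 : ((S + R) * D) i j = (S + R) i k * D k j + (S + R) i l * D l j := by
      rw [Matrix.mul_apply]
      apply sum_support_pair k l hklne
      intro m hmk hml
      rw [hD0 m j (fun h => hmk h.1) (fun h => hml h.1), mul_zero]
    have h2 : (Dᴴ * (S + R)) i j =
        star (D k i) * (S + R) k j + star (D l i) * (S + R) l j := by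
      rw [Matrix.mul_apply]
      apply sum_support_pair k l hklne
      intro m hmk hml
      rw [Matrix.conjTranspose_apply,
        hD0 m i (fun h => hmk h.1) (fun h => hml h.1), star_zero, zero_mul]
    simp only [B', Matrix.add_apply, h1, h2]
  -- norms of D entries
  have hnDkl : ‖D k l‖ = A⁻¹ * ‖B k l‖ := by
    rw [hDkl, norm_smul, Real.norm_eq_abs, abs_inv, hAsymm]
  have hnBlk : ‖B l k‖ = ‖B k l‖ := by
    rw [← hBstar k l, norm_star]
  have hnDlk : ‖D l k‖ = A⁻¹ * ‖B k l‖ := by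
    rw [hDlk, norm_smul, Real.norm_eq_abs, abs_inv, hnBlk]
  constructor
  · -- the (k,l) entry
    have key : B' k l = (s l - s k)⁻¹ • (R k k * B k l)
        + (s k - s l)⁻¹ • (B k l * R l l) := by
      rw [hB'e k l, hDkl,
        hD0 l l (fun h => hklne (h.1.symm)) (fun h => hklne (h.2.symm)),
        hD0 k k (fun h => hklne h.2) (fun h => hklne h.1)]
      have hstar : star (D l k) = (s k - s l)⁻¹ • B k l := by
        rw [hDlk, hstar_smul, hBstar]
      rw [hstar]
      simp only [S, Matrix.add_apply, Matrix.diagonal_apply_eq, mul_zero, star_zero,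
        zero_mul, add_zero, zero_add]
      simp only [add_mul, mul_add, smul_mul_assoc, mul_smul_comm,
        Quaternion.coe_mul_eq_smul, Quaternion.mul_coe_eq_smul, smul_smul]
      match_scalars
      · field_simp
        ring
      · ring
      · ring
    rw [key]
    calc ‖(s l - s k)⁻¹ • (R k k * B k l) + (s k - s l)⁻¹ • (B k l * R l l)‖
        ≤ ‖(s l - s k)⁻¹ • (R k k * B k l)‖ + ‖(s k - s l)⁻¹ • (B k l * R l l)‖ :=
          norm_add_le _ _
      _ = A⁻¹ * (‖R k k‖ * ‖B k l‖) + A⁻¹ * (‖B k l‖ * ‖R l l‖) := by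
          rw [norm_smul, norm_smul, Real.norm_eq_abs, Real.norm_eq_abs, abs_inv, abs_inv,
            hAsymm, norm_mul, norm_mul]
      _ ≤ A⁻¹ * (η * ‖B k l‖) + A⁻¹ * (‖B k l‖ * η) := by
          gcongr
          · exact hRbd k k
          · exact hRbd l l
      _ = r * η * ‖B k l‖ := by
          simp only [r, ← hA]
          field_simp
          ring
  · intro i j hij
    push_neg at hij
    obtain ⟨hij1, hij2⟩ := hij
    rw [hB'e i j]
    have E0 : 0 ≤ A⁻¹ * (η * ‖B k l‖) := by positivity
    have hT12 : ‖(S + R) i k * D k j + (S + R) i l * D l j‖ ≤ A⁻¹ * (η * ‖B k l‖) := by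
      by_cases hj : j = l
      · rw [hj]
        have hik : i ≠ k := fun h => hij1 h hj
        have hSik : (S + R) i k = R i k := by
          simp [S, Matrix.add_apply, Matrix.diagonal_apply_ne _ hik]
        rw [hD0 l l (fun h => hklne h.1.symm) (fun h => hklne h.2.symm), mul_zero,
          add_zero, hSik, norm_mul, hnDkl]
        calc ‖R i k‖ * (A⁻¹ * ‖B k l‖) ≤ η * (A⁻¹ * ‖B k l‖) := by
              gcongr; exact hRbd i k
          _ = A⁻¹ * (η * ‖B k l‖) := by ring
      · by_cases hjk : j = k
        · rw [hjk]
          have hil : i ≠ l := fun h => hij2 h hjk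
          have hSil : (S + R) i l = R i l := by
            simp [S, Matrix.add_apply, Matrix.diagonal_apply_ne _ hil]
          rw [hD0 k k (fun h => hklne h.2) (fun h => hklne h.1), mul_zero, zero_add,
            hSil, norm_mul, hnDlk]
          calc ‖R i l‖ * (A⁻¹ * ‖B k l‖) ≤ η * (A⁻¹ * ‖B k l‖) := by
                gcongr; exact hRbd i l
            _ = A⁻¹ * (η * ‖B k l‖) := by ring
        · rw [hD0 k j (fun h => hj h.2) (fun h => hjk h.2),
            hD0 l j (fun h => hj h.2) (fun h => hjk h.2), mul_zero, mul_zero, add_zero,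
            norm_zero]
          exact E0
    have hT34 : ‖star (D k i) * (S + R) k j + star (D l i) * (S + R) l j‖
        ≤ A⁻¹ * (η * ‖B k l‖) := by
      by_cases hi : i = l
      · rw [hi]
        have hjk : j ≠ k := fun h => hij2 hi h
        have hSkj : (S + R) k j = R k j := by
          simp [S, Matrix.add_apply, Matrix.diagonal_apply_ne _ (Ne.symm hjk)]
        rw [hD0 l l (fun h => hklne h.1.symm) (fun h => hklne h.2.symm), star_zero,
          zero_mul, add_zero, hSkj, norm_mul, norm_star, hnDkl]
        calc A⁻¹ * ‖B k l‖ * ‖R k j‖ ≤ A⁻¹ * ‖B k l‖ * η := by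
              gcongr; exact hRbd k j
          _ = A⁻¹ * (η * ‖B k l‖) := by ring
      · by_cases hik : i = k
        · rw [hik]
          have hjl : j ≠ l := fun h => hij1 hik h
          have hSlj : (S + R) l j = R l j := by
            simp [S, Matrix.add_apply, Matrix.diagonal_apply_ne _ (fun h => hjl h.symm)]
          rw [hD0 k k (fun h => hklne h.2) (fun h => hklne h.1), star_zero,
            zero_mul, zero_add, hSlj, norm_mul, norm_star, hnDlk]
          calc A⁻¹ * ‖B k l‖ * ‖R l j‖ ≤ A⁻¹ * ‖B k l‖ * η := by
                gcongr; exact hRbd l j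
            _ = A⁻¹ * (η * ‖B k l‖) := by ring
        · rw [hD0 k i (fun h => hi h.2) (fun h => hklne h.1),
            hD0 l i (fun h => hklne h.1.symm) (fun h => hik h.2)]
          simpa using E0
    calc ‖(S + R) i k * D k j + (S + R) i l * D l j
          + (star (D k i) * (S + R) k j + star (D l i) * (S + R) l j) + B i j‖
        ≤ ‖(S + R) i k * D k j + (S + R) i l * D l j
          + (star (D k i) * (S + R) k j + star (D l i) * (S + R) l j)‖ + ‖B i j‖ :=
          norm_add_le _ _
      _ ≤ (‖(S + R) i k * D k j + (S + R) i l * D l j‖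
          + ‖star (D k i) * (S + R) k j + star (D l i) * (S + R) l j‖) + ‖B i j‖ := by
          gcongr
          exact norm_add_le _ _
      _ ≤ (A⁻¹ * (η * ‖B k l‖) + A⁻¹ * (η * ‖B k l‖)) + ‖B i j‖ := by
          gcongr
      _ = ‖B i j‖ + r * η * ‖B k l‖ := by
          simp only [r, ← hA]
          field_simp
          ring
end
end

section
/- Let n = t₁ + … + t_p with positive integers t_i and h₁ = max_i t_i, and let Q₁ be the n×n block-diagonal quaternion matrix whose i-th diagonal block is μ_i I_{t_i} with μ_i real. Let Q₂ be an n×n quaternion Hermitian matrix with |(Q₂)_{ii}| ≤ γ for all i and |(Q₂)_{ij}| ≤ η for all i ≠ j, where 0 < η ≤ γ. Let L be an n×n block-diagonal unitary quaternion matrix with the same block structure (its i-th diagonal block of size t_i being unitary). Then for all i ≠ j, |(Lᴴ (Q₁ + Q₂) L)_{ij}| ≤ γ + (h₁ − 1) η. -/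
open Matrix

noncomputable section

set_option maxHeartbeats 2000000

/-- The off-diagonal estimate used in STEP 3 of the three-step Jacobi algorithm: with the
index set partitioned into `p` blocks of sizes `t i`, `Q₁` block-diagonal with `i`-th block
`μ_i I`, `Q₂` Hermitian with `|(Q₂)_{ii}| ≤ γ` and `|(Q₂)_{ij}| ≤ η` off diagonal,
`0 < η ≤ γ`, and `L` a block-diagonal unitary quaternion matrix with the same block
structure, every off-diagonal entry of `Lᴴ(Q₁ + Q₂)L` has magnitude at most
`γ + (h₁ − 1)η`, where `h₁ = max_i t_i`. -/
theorem step3_offdiagonal_estimate (p : ℕ) (t : Fin p → ℕ) (ht : ∀ i, 0 < t i)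
    (μ : Fin p → ℝ) (γ η : ℝ) (hη : 0 < η) (hγ : η ≤ γ)
    (Q2 L : Matrix ((i : Fin p) × Fin (t i)) ((i : Fin p) × Fin (t i)) (Quaternion ℝ))
    (hQ2 : Q2ᴴ = Q2)
    (hQ2d : ∀ x, ‖Q2 x x‖ ≤ γ)
    (hQ2o : ∀ x y, x ≠ y → ‖Q2 x y‖ ≤ η)
    (hL : Lᴴ * L = 1) (hL' : L * Lᴴ = 1)
    (hLblock : ∀ x y : (i : Fin p) × Fin (t i), x.1 ≠ y.1 → L x y = 0) :
    ∀ x y : (i : Fin p) × Fin (t i), x ≠ y →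
      ‖(Lᴴ * (Matrix.diagonal (fun x : (i : Fin p) × Fin (t i) => ((μ x.1 : ℝ) : Quaternion ℝ)) + Q2) * L) x y‖ ≤
        γ + (((Finset.univ.sup t : ℕ) : ℝ) - 1) * η := by
  classical
  intro x y hxy
  set D : Matrix ((i : Fin p) × Fin (t i)) ((i : Fin p) × Fin (t i)) (Quaternion ℝ) :=
    Matrix.diagonal (fun x : (i : Fin p) × Fin (t i) => ((μ x.1 : ℝ) : Quaternion ℝ)) with hD
  -- D commutes with L
  have hDL : D * L = L * D := by
    refine Matrix.ext fun k m => ?_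
    rw [hD, Matrix.diagonal_mul, Matrix.mul_diagonal]
    by_cases h : k.1 = m.1
    · rw [h, Quaternion.coe_commutes]
    · rw [hLblock k m h, mul_zero, zero_mul]
  have hmat : Lᴴ * (D + Q2) * L = D + Lᴴ * Q2 * L := by
    rw [Matrix.mul_add, Matrix.add_mul, Matrix.mul_assoc Lᴴ D L, hDL,
      ← Matrix.mul_assoc Lᴴ L D, hL, Matrix.one_mul]
  have hval : (Lᴴ * (D + Q2) * L) x y = (Lᴴ * Q2 * L) x y := by
    rw [hmat, Matrix.add_apply, hD, Matrix.diagonal_apply_ne _ hxy, zero_add]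
  set a : ((i : Fin p) × Fin (t i)) → ℝ := fun k => ‖L k x‖ with ha
  set b : ((i : Fin p) × Fin (t i)) → ℝ := fun k => ‖L k y‖ with hb
  have hapos : ∀ k, 0 ≤ a k := fun k => norm_nonneg _
  have hbpos : ∀ k, 0 ≤ b k := fun k => norm_nonneg _
  have hax : ∀ k : (i : Fin p) × Fin (t i), k.1 ≠ x.1 → a k = 0 := by
    intro k hk; simp [ha, hLblock k x hk]
  have hbx : ∀ k : (i : Fin p) × Fin (t i), k.1 ≠ y.1 → b k = 0 := by
    intro k hk; simp [hb, hLblock k y hk]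
  -- column sums
  have hcol : ∀ (z : (i : Fin p) × Fin (t i)), ∑ k, ‖L k z‖^2 = 1 := by
    intro z
    have h1 : (Lᴴ * L) z z = 1 := by rw [hL, Matrix.one_apply_eq]
    rw [Matrix.mul_apply] at h1
    simp only [Matrix.conjTranspose_apply] at h1
    have h2 : ∑ k, ((‖L k z‖^2 : ℝ) : Quaternion ℝ) = (1 : Quaternion ℝ) := by
      rw [← h1]
      refine Finset.sum_congr rfl fun k _ => ?_
      rw [Quaternion.star_mul_self, Quaternion.normSq_eq_norm_mul_self, sq]
    apply Quaternion.coe_injective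
    exact ((map_sum (algebraMap ℝ (Quaternion ℝ)) _ _).trans h2).trans
      Quaternion.coe_one.symm
  -- cardinality of blocks
  have hcard : ∀ i : Fin p,
      (Finset.univ.filter (fun k : (i : Fin p) × Fin (t i) => k.1 = i)).card = t i := by
    intro i
    rw [Finset.card_filter, ← Finset.univ_sigma_univ, Finset.sum_sigma]
    simp [apply_ite Finset.card, Finset.card_univ]
  -- restriction of sums to a block
  have hsum_eq : ∀ (f : ((i : Fin p) × Fin (t i)) → ℝ) (i : Fin p),
      (∀ k, k.1 ≠ i → f k = 0) →
      ∑ k ∈ Finset.univ.filter (fun k : (i : Fin p) × Fin (t i) => k.1 = i), f k = ∑ k, f k := by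
    intro f i h
    exact Finset.sum_filter_of_ne (fun k _ hk => by
      by_contra hne; exact hk (h k hne))
  have hcolSa : ∑ k ∈ Finset.univ.filter (fun k : (i : Fin p) × Fin (t i) => k.1 = x.1),
      a k ^ 2 = 1 := by
    rw [hsum_eq _ _ (fun k hk => by rw [hax k hk]; ring)]
    exact hcol x
  have hcolSb : ∑ k ∈ Finset.univ.filter (fun k : (i : Fin p) × Fin (t i) => k.1 = y.1),
      b k ^ 2 = 1 := by
    rw [hsum_eq _ _ (fun k hk => by rw [hbx k hk]; ring)]
    exact hcol y
  -- entry expansion and norm bound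
  have hform : (Lᴴ * Q2 * L) x y = ∑ l, ∑ k, star (L k x) * Q2 k l * L l y := by
    simp only [Matrix.mul_apply, Matrix.conjTranspose_apply, Finset.sum_mul]
  have hbound : ‖(Lᴴ * Q2 * L) x y‖ ≤ ∑ l, ∑ k, a k * ‖Q2 k l‖ * b l := by
    rw [hform]
    refine (norm_sum_le _ _).trans (Finset.sum_le_sum fun l _ => ?_)
    refine (norm_sum_le _ _).trans (Finset.sum_le_sum fun k _ => ?_)
    exact le_of_eq (by rw [norm_mul, norm_mul, norm_star])
  have hsplit : ∑ l, ∑ k, a k * ‖Q2 k l‖ * b l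
      = (∑ l, a l * ‖Q2 l l‖ * b l)
        + ∑ l, ∑ k ∈ Finset.univ.erase l, a k * ‖Q2 k l‖ * b l := by
    rw [← Finset.sum_add_distrib]
    refine Finset.sum_congr rfl fun l _ => ?_
    exact (Finset.add_sum_erase _ _ (Finset.mem_univ l)).symm
  have hoff : ∑ l, ∑ k ∈ Finset.univ.erase l, a k * ‖Q2 k l‖ * b l
      ≤ η * ∑ l, ∑ k ∈ Finset.univ.erase l, a k * b l := by
    rw [Finset.mul_sum]
    refine Finset.sum_le_sum fun l _ => ?_
    rw [Finset.mul_sum]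
    refine Finset.sum_le_sum fun k hk => ?_
    have hkl : k ≠ l := Finset.ne_of_mem_erase hk
    calc a k * ‖Q2 k l‖ * b l = (a k * b l) * ‖Q2 k l‖ := by ring
      _ ≤ (a k * b l) * η :=
          mul_le_mul_of_nonneg_left (hQ2o k l hkl) (mul_nonneg (hapos k) (hbpos l))
      _ = η * (a k * b l) := by ring
  set h1 : ℝ := ((Finset.univ.sup t : ℕ) : ℝ) with hh1
  have hth : ∀ i : Fin p, ((t i : ℝ)) ≤ h1 := by
    intro i
    rw [hh1]
    exact_mod_cast Finset.le_sup (Finset.mem_univ i)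
  rw [hval]
  by_cases hxy1 : x.1 = y.1
  · -- same block
    set S := Finset.univ.filter (fun k : (i : Fin p) × Fin (t i) => k.1 = x.1) with hS
    have hbx' : ∀ k : (i : Fin p) × Fin (t i), k.1 ≠ x.1 → b k = 0 := by
      intro k hk; exact hbx k (by rw [← hxy1]; exact hk)
    have hcolSb' : ∑ k ∈ S, b k ^ 2 = 1 := by
      rw [hS, hsum_eq _ _ (fun k hk => by rw [hbx' k hk]; ring)]
      exact hcol y
    -- diagonal part
    have hdiag : ∑ l, a l * ‖Q2 l l‖ * b l ≤ γ := by
      have h2 : ∑ l, a l * ‖Q2 l l‖ * b l ≤ ∑ l, γ * ((a l^2 + b l^2)/2) := by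
        refine Finset.sum_le_sum fun l _ => ?_
        have := hQ2d l
        nlinarith [hapos l, hbpos l, norm_nonneg (Q2 l l), sq_nonneg (a l - b l),
          lt_of_lt_of_le hη hγ]
      have h3 : ∑ l, γ * ((a l^2 + b l^2)/2)
          = γ * (((∑ l, a l^2) + ∑ l, b l^2)/2) := by
        rw [← Finset.mul_sum, ← Finset.sum_div, Finset.sum_add_distrib]
      rw [h3, hcol x, hcol y] at h2
      linarith
    -- off-diagonal part
    have hU : ∑ l, ∑ k ∈ Finset.univ.erase l, a k * b l ≤ (t x.1 : ℝ) - 1 := by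
      have hstep1 : ∑ l, ∑ k ∈ Finset.univ.erase l, a k * b l
          = ∑ l ∈ S, ∑ k ∈ Finset.univ.erase l, a k * b l := by
        rw [hS, hsum_eq]
        intro l hl
        refine Finset.sum_eq_zero fun k _ => ?_
        rw [hbx' l hl, mul_zero]
      have hstep2 : ∀ l ∈ S, ∑ k ∈ Finset.univ.erase l, a k * b l
          = ∑ k ∈ S.erase l, a k * b l := by
        intro l _
        refine (Finset.sum_subset ?_ ?_).symm
        · exact Finset.erase_subset_erase _ (Finset.subset_univ _)
        · intro k hk hk2
          have hkl : k ≠ l := Finset.ne_of_mem_erase hk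
          have hkS : k ∉ S := fun h => hk2 (Finset.mem_erase.mpr ⟨hkl, h⟩)
          have : k.1 ≠ x.1 := by
            intro h; exact hkS (by rw [hS]; exact Finset.mem_filter.mpr ⟨Finset.mem_univ _, h⟩)
          rw [hax k this, zero_mul]
      have hScard : S.card = t x.1 := by rw [hS]; exact hcard x.1
      have htx : 1 ≤ t x.1 := ht x.1
      calc ∑ l, ∑ k ∈ Finset.univ.erase l, a k * b l
          = ∑ l ∈ S, ∑ k ∈ S.erase l, a k * b l := by
            rw [hstep1]; exact Finset.sum_congr rfl hstep2
        _ ≤ ∑ l ∈ S, ∑ k ∈ S.erase l, (a k^2 + b l^2)/2 := by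
            refine Finset.sum_le_sum fun l _ => Finset.sum_le_sum fun k _ => ?_
            nlinarith [sq_nonneg (a k - b l)]
        _ = ∑ l ∈ S, ((1 - a l^2) + ((t x.1 : ℝ) - 1) * b l^2)/2 := by
            refine Finset.sum_congr rfl fun l hl => ?_
            rw [← Finset.sum_div, Finset.sum_add_distrib, Finset.sum_const,
              Finset.sum_erase_eq_sub hl, hcolSa, Finset.card_erase_of_mem hl, hScard,
              nsmul_eq_mul, Nat.cast_sub htx, Nat.cast_one]
        _ = (((S.card : ℝ) - ∑ l ∈ S, a l^2) + ((t x.1 : ℝ) - 1) * ∑ l ∈ S, b l^2)/2 := by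
            rw [← Finset.sum_div, Finset.sum_add_distrib, Finset.sum_sub_distrib,
              Finset.sum_const, ← Finset.mul_sum, nsmul_eq_mul, mul_one]
        _ = (t x.1 : ℝ) - 1 := by
            rw [hcolSa, hcolSb', hScard]; ring
    have hmono : η * (∑ l, ∑ k ∈ Finset.univ.erase l, a k * b l) ≤ η * ((t x.1 : ℝ) - 1) :=
      mul_le_mul_of_nonneg_left hU hη.le
    have hfin : η * ((t x.1 : ℝ) - 1) ≤ (h1 - 1) * η := by
      nlinarith [hth x.1]
    calc ‖(Lᴴ * Q2 * L) x y‖ ≤ ∑ l, ∑ k, a k * ‖Q2 k l‖ * b l := hbound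
      _ = (∑ l, a l * ‖Q2 l l‖ * b l)
          + ∑ l, ∑ k ∈ Finset.univ.erase l, a k * ‖Q2 k l‖ * b l := hsplit
      _ ≤ γ + (h1 - 1) * η := by
          have := hoff
          linarith
  · -- different blocks
    set Sx := Finset.univ.filter (fun k : (i : Fin p) × Fin (t i) => k.1 = x.1) with hSx
    set Sy := Finset.univ.filter (fun k : (i : Fin p) × Fin (t i) => k.1 = y.1) with hSy
    have hScardx : Sx.card = t x.1 := by rw [hSx]; exact hcard x.1
    have hScardy : Sy.card = t y.1 := by rw [hSy]; exact hcard y.1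
    -- diagonal part vanishes
    have hdiag : ∑ l, a l * ‖Q2 l l‖ * b l = 0 := by
      refine Finset.sum_eq_zero fun l _ => ?_
      by_cases h : l.1 = x.1
      · rw [hbx l (h ▸ hxy1), mul_zero]
      · rw [hax l h, zero_mul, zero_mul]
    have hU : ∑ l, ∑ k ∈ Finset.univ.erase l, a k * b l
        ≤ ((t x.1 : ℝ) + (t y.1 : ℝ))/2 := by
      have hstep1 : ∑ l, ∑ k ∈ Finset.univ.erase l, a k * b l
          = ∑ l ∈ Sy, ∑ k ∈ Finset.univ.erase l, a k * b l := by
        rw [hSy, hsum_eq]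
        intro l hl
        refine Finset.sum_eq_zero fun k _ => ?_
        rw [hbx l hl, mul_zero]
      have hstep2 : ∀ l ∈ Sy, ∑ k ∈ Finset.univ.erase l, a k * b l
          = ∑ k ∈ Sx, a k * b l := by
        intro l hl
        have hly : l.1 = y.1 := (Finset.mem_filter.mp hl).2
        refine (Finset.sum_subset ?_ ?_).symm
        · intro k hk
          have hkx : k.1 = x.1 := (Finset.mem_filter.mp hk).2
          refine Finset.mem_erase.mpr ⟨?_, Finset.mem_univ _⟩
          intro h; apply hxy1; rw [← hkx, h, hly]
        · intro k hk hk2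
          have : k.1 ≠ x.1 := fun h =>
            hk2 (Finset.mem_filter.mpr ⟨Finset.mem_univ _, h⟩)
          rw [hax k this, zero_mul]
      calc ∑ l, ∑ k ∈ Finset.univ.erase l, a k * b l
          = ∑ l ∈ Sy, ∑ k ∈ Sx, a k * b l := by
            rw [hstep1]; exact Finset.sum_congr rfl hstep2
        _ ≤ ∑ l ∈ Sy, ∑ k ∈ Sx, (a k^2 + b l^2)/2 := by
            refine Finset.sum_le_sum fun l _ => Finset.sum_le_sum fun k _ => ?_
            nlinarith [sq_nonneg (a k - b l)]
        _ = ∑ l ∈ Sy, (1 + (t x.1 : ℝ) * b l^2)/2 := by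
            refine Finset.sum_congr rfl fun l hl => ?_
            rw [← Finset.sum_div, Finset.sum_add_distrib, Finset.sum_const,
              hcolSa, nsmul_eq_mul, hScardx]
        _ = (((Sy.card : ℝ)) + (t x.1 : ℝ) * ∑ l ∈ Sy, b l^2)/2 := by
            rw [← Finset.sum_div, Finset.sum_add_distrib, Finset.sum_const,
              ← Finset.mul_sum, nsmul_eq_mul, mul_one]
        _ = ((t x.1 : ℝ) + (t y.1 : ℝ))/2 := by
            rw [hcolSb, hScardy]; ring
    have hmono : η * (∑ l, ∑ k ∈ Finset.univ.erase l, a k * b l)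
        ≤ η * (((t x.1 : ℝ) + (t y.1 : ℝ))/2) := mul_le_mul_of_nonneg_left hU hη.le
    have hfin : η * (((t x.1 : ℝ) + (t y.1 : ℝ))/2) ≤ γ + (h1 - 1) * η := by
      nlinarith [hth x.1, hth y.1]
    calc ‖(Lᴴ * Q2 * L) x y‖ ≤ ∑ l, ∑ k, a k * ‖Q2 k l‖ * b l := hbound
      _ = (∑ l, a l * ‖Q2 l l‖ * b l)
          + ∑ l, ∑ k ∈ Finset.univ.erase l, a k * ‖Q2 k l‖ * b l := hsplit
      _ ≤ γ + (h1 - 1) * η := by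
          have := hoff
          rw [hdiag] at *
          linarith
end
end
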